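/- arXiv:math/0502557 — 6 statements merged into one kernel-verified Lean document; each statement's English description precedes it below -/
import Mathlib

section
/- Let d ≥ 2 be an integer and let x be a nonzero real number. Then the partial products ∏_{j=1}^{N} ( (1/d) ∑_{k=0}^{d−1} e(k x / d^j) ) converge, as N → ∞, to (e(x) − 1)/(2πi x). -/
/-- The exponential function `e(r) = e^{2πir}`. -/
noncomputable def e (r : ℝ) : ℂ := Complex.exp (2 * Real.pi * Complex.I * r)

open Finset Filter


private lemma two_pi_I_ne : (2 * (Real.pi:ℂ) * Complex.I) ≠ 0 := by
  simp [Real.pi_ne_zero, Complex.I_ne_zero]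

private lemma e_eq_one_iff (y : ℝ) : e y = 1 ↔ ∃ n : ℤ, y = n := by
  rw [e, Complex.exp_eq_one_iff]
  constructor
  · rintro ⟨n, hn⟩
    refine ⟨n, ?_⟩
    rw [mul_comm ((n:ℂ))] at hn
    have := mul_left_cancel₀ two_pi_I_ne hn
    exact_mod_cast this
  · rintro ⟨n, hn⟩
    exact ⟨n, by rw [hn]; push_cast; ring⟩

private lemma e_nat_mul (k : ℕ) (y : ℝ) : e ((k:ℝ) * y) = (e y) ^ k := by
  rw [e, e, ← Complex.exp_nat_mul]
  congr 1
  push_cast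
  ring

private lemma sum_e (d : ℕ) (y : ℝ) (h : e y ≠ 1) :
    ∑ k ∈ Finset.range d, e ((k:ℝ) * y) = (e ((d:ℝ) * y) - 1) / (e y - 1) := by
  have : ∑ k ∈ Finset.range d, e ((k:ℝ) * y) = ∑ k ∈ Finset.range d, (e y) ^ k := by
    exact Finset.sum_congr rfl fun k _ => e_nat_mul k y
  rw [this, geom_sum_eq h, e_nat_mul d y]

/-- For an integer `d ≥ 2` and `x ≠ 0`, the partial products
`∏_{j=1}^{N} ((1/d) ∑_{k=0}^{d−1} e(kx/d^j))` converge to `(e(x) − 1)/(2πix)`. -/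
theorem stmt_4 (d : ℕ) (hd : 2 ≤ d) (x : ℝ) (hx : x ≠ 0) :
    Filter.Tendsto
      (fun N : ℕ => ∏ j ∈ Finset.range N,
        ((1 / (d : ℂ)) * ∑ k ∈ Finset.range d, e ((k : ℝ) * x / (d : ℝ) ^ (j + 1))))
      Filter.atTop
      (nhds ((e x - 1) / (2 * Real.pi * Complex.I * x))) := by
  classical
  have hd0R : (d:ℝ) ≠ 0 := by positivity
  have hd1R : (1:ℝ) < (d:ℝ) := by exact_mod_cast lt_of_lt_of_le one_lt_two hd
  have hd0C : (d:ℂ) ≠ 0 := by exact_mod_cast (Nat.cast_ne_zero (R := ℂ)).mpr (by omega)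
  have harith : ∀ j : ℕ, (d:ℝ) * (x / (d:ℝ)^(j+1)) = x / (d:ℝ)^j := by
    intro j
    rw [pow_succ]
    field_simp
  -- the sum in closed form when e(x/d^{j+1}) ≠ 1
  have hsum : ∀ j : ℕ, e (x/(d:ℝ)^(j+1)) ≠ 1 →
      ∑ k ∈ Finset.range d, e ((k:ℝ) * x / (d:ℝ)^(j+1))
        = (e (x/(d:ℝ)^j) - 1) / (e (x/(d:ℝ)^(j+1)) - 1) := by
    intro j hne
    have : ∀ k : ℕ, (k:ℝ) * x / (d:ℝ)^(j+1) = (k:ℝ) * (x/(d:ℝ)^(j+1)) := by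
      intro k; ring
    simp only [this]
    rw [sum_e d _ hne, harith j]
  by_cases H : ∃ j : ℕ, ∃ n : ℤ, x / (d:ℝ)^j = (n:ℝ)
  · -- degenerate case: x/d^m ∈ ℤ for maximal m; product eventually 0 and e x = 1
    obtain ⟨B, hB⟩ := pow_unbounded_of_one_lt |x| hd1R
    have hPB : ∀ j, B ≤ j → ¬ ∃ n : ℤ, x / (d:ℝ)^j = (n:ℝ) := by
      intro j hj ⟨n, hn⟩
      have hlt : |x / (d:ℝ)^j| < 1 := by
        rw [abs_div, abs_of_pos (by positivity : (0:ℝ) < (d:ℝ)^j)]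
        rw [div_lt_one (by positivity)]
        calc |x| < (d:ℝ)^B := hB
          _ ≤ (d:ℝ)^j := pow_le_pow_right₀ (le_of_lt hd1R) hj
      rw [hn] at hlt
      have : n = 0 := by
        have := abs_lt.mp hlt
        have h1 : (-1:ℝ) < (n:ℝ) := this.1
        have h2 : (n:ℝ) < 1 := this.2
        have : (-1:ℤ) < n := by exact_mod_cast h1
        have : n < 1 := by exact_mod_cast h2
        omega
      rw [this] at hn
      push_cast at hn
      exact hx ((div_eq_zero_iff.mp hn).resolve_right (by positivity : (0:ℝ) < (d:ℝ)^j).ne')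
    set P : ℕ → Prop := fun j => ∃ n : ℤ, x / (d:ℝ)^j = (n:ℝ) with hP
    obtain ⟨j₀, hj₀⟩ := H
    have hj₀B : j₀ ≤ B := by
      by_contra hc
      exact hPB j₀ (by omega) hj₀
    set m := Nat.findGreatest P B with hm
    have hPm : P m := Nat.findGreatest_spec hj₀B hj₀
    have hnotm1 : ¬ P (m+1) := by
      intro hc
      have hle : m + 1 ≤ B := by
        by_contra hgt
        exact hPB (m+1) (by omega) hc
      have := Nat.le_findGreatest hle hc
      omega
    obtain ⟨n, hn⟩ := hPm
    -- e x = 1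
    have hex : e x = 1 := by
      rw [e_eq_one_iff]
      refine ⟨n * (d:ℤ)^m, ?_⟩
      have : x = (n:ℝ) * (d:ℝ)^m := by
        field_simp at hn
        linarith [hn]
      rw [this]; push_cast; ring
    have htgt : (e x - 1) / (2 * Real.pi * Complex.I * x) = 0 := by
      rw [hex]; simp
    rw [htgt]
    refine Filter.Tendsto.congr' ?_ tendsto_const_nhds
    rw [Filter.EventuallyEq, eventually_atTop]
    refine ⟨m+1, fun N hN => ?_⟩
    symm
    apply Finset.prod_eq_zero (Finset.mem_range.mpr (by omega : m < N))
    have hne : e (x/(d:ℝ)^(m+1)) ≠ 1 := by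
      rw [Ne, e_eq_one_iff]; exact hnotm1
    rw [hsum m hne]
    have : e (x/(d:ℝ)^m) = 1 := (e_eq_one_iff _).mpr ⟨n, hn⟩
    rw [this]
    simp
  · -- generic case
    push_neg at H
    have hE : ∀ j : ℕ, e (x/(d:ℝ)^j) - 1 ≠ 0 := by
      intro j
      rw [sub_ne_zero]
      rw [Ne, e_eq_one_iff]
      push_neg
      intro n
      exact H j n
    have key : ∀ N : ℕ, (∏ j ∈ Finset.range N,
        ((1 / (d : ℂ)) * ∑ k ∈ Finset.range d, e ((k : ℝ) * x / (d : ℝ) ^ (j + 1))))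
        = (e x - 1) / ((d:ℂ)^N * (e (x/(d:ℝ)^N) - 1)) := by
      intro N
      induction N with
      | zero =>
        simp only [Finset.range_zero, Finset.prod_empty, pow_zero, one_mul, div_one]
        exact (div_self (by simpa using hE 0)).symm
      | succ N ih =>
        rw [Finset.prod_range_succ, ih, hsum N (by rw [Ne, e_eq_one_iff]; push_neg; exact H (N+1))]
        have h1 := hE N
        have h2 := hE (N+1)
        field_simp
        ring
    -- the limit of the closed form
    have hslope : Tendsto (fun z : ℂ => (Complex.exp (2*Real.pi*Complex.I*z) - 1)/z)
        (nhdsWithin 0 {0}ᶜ) (nhds (2*Real.pi*Complex.I)) := by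
      have hderiv : HasDerivAt (fun z : ℂ => Complex.exp (2*Real.pi*Complex.I*z))
          (2*Real.pi*Complex.I) 0 := by
        have h := ((hasDerivAt_id (0:ℂ)).const_mul (2*(Real.pi:ℂ)*Complex.I)).cexp
        simpa using h
      have h := hasDerivAt_iff_tendsto_slope.mp hderiv
      refine h.congr fun z => ?_
      simp [slope_def_field]
    have ht0 : Tendsto (fun N : ℕ => ((x/(d:ℝ)^N : ℝ) : ℂ)) atTop (nhdsWithin 0 {0}ᶜ) := by
      apply tendsto_nhdsWithin_of_tendsto_nhds_of_eventually_within
      · have h1 : Tendsto (fun N : ℕ => x/(d:ℝ)^N) atTop (nhds 0) := by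
          have h2 : Tendsto (fun N : ℕ => ((d:ℝ)⁻¹)^N) atTop (nhds 0) :=
            tendsto_pow_atTop_nhds_zero_of_lt_one (by positivity) (by
              rw [inv_lt_one_iff₀]; right; exact hd1R)
          have := h2.const_mul x
          simpa [div_eq_mul_inv, inv_pow] using this
        have := (Complex.continuous_ofReal.tendsto 0).comp h1
        simpa [Function.comp_def] using this
      · filter_upwards with N
        simp only [Set.mem_compl_iff, Set.mem_singleton_iff]
        exact_mod_cast div_ne_zero hx (by positivity)
    have hcomp := hslope.comp ht0
    have hden : Tendsto (fun N : ℕ => (d:ℂ)^N * (e (x/(d:ℝ)^N) - 1)) atTop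
        (nhds ((x:ℂ) * (2*Real.pi*Complex.I))) := by
      have h := hcomp.const_mul (x:ℂ)
      refine h.congr fun N => ?_
      show (x:ℂ) * ((Complex.exp (2*Real.pi*Complex.I*((x/(d:ℝ)^N : ℝ):ℂ)) - 1) / ((x/(d:ℝ)^N : ℝ):ℂ))
          = (d:ℂ)^N * (e (x/(d:ℝ)^N) - 1)
      rw [e]
      push_cast
      have hxC : (x:ℂ) ≠ 0 := by exact_mod_cast hx
      have hdN : ((d:ℂ))^N ≠ 0 := pow_ne_zero _ hd0C
      field_simp
    have hne2 : (x:ℂ) * (2*Real.pi*Complex.I) ≠ 0 :=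
      mul_ne_zero (by exact_mod_cast hx) two_pi_I_ne
    have lim : Tendsto (fun N : ℕ => (e x - 1) / ((d:ℂ)^N * (e (x/(d:ℝ)^N) - 1))) atTop
        (nhds ((e x - 1)/((x:ℂ)*(2*Real.pi*Complex.I)))) :=
      tendsto_const_nhds.div hden hne2
    have htgt : (e x - 1) / (2 * Real.pi * Complex.I * (x:ℂ))
        = (e x - 1) / ((x:ℂ) * (2*Real.pi*Complex.I)) := by ring_nf
    rw [htgt]
    exact lim.congr fun N => (key N).symm
end

section
/- Define Φ : ℝ → ℂ by Φ(x) = (e(x) − 1)/(2πi x) for x ≠ 0 and Φ(0) = 1. Then the series ∑_{p ∈ ℤ} |Φ(x − p)|² converges uniformly on [0,1], in the sense that the net of partial sums (indexed by finite subsets of ℤ, ordered by inclusion) converges uniformly on [0,1] to the function x ↦ ∑_{p ∈ ℤ} |Φ(x − p)|². Consequently there exists K ≥ 0 such that ∑_{p ∈ ℤ} |Φ(x − p)|² ≤ K for all x ∈ ℝ. -/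
open Filter

lemma norm_e_sub_one_le_two (x : ℝ) : ‖e x - 1‖ ≤ 2 := by
  calc ‖e x - 1‖ ≤ ‖e x‖ + ‖(1 : ℂ)‖ := norm_sub_le _ _
    _ ≤ 2 := by
        have : ‖e x‖ = 1 := by
          rw [e, Complex.norm_exp]
          norm_num
        simp [this]
        norm_num

lemma norm_e_sub_one_le_lin (x : ℝ) : ‖e x - 1‖ ≤ 2 * Real.pi * |x| := by
  have hθ : (2 * Real.pi * Complex.I * x) = ((2 * Real.pi * x : ℝ) : ℂ) * Complex.I := by
    push_cast; ring
  set θ : ℝ := 2 * Real.pi * x with hθdef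
  have h1 : e x - 1 = (Real.cos θ - 1 : ℝ) + (Real.sin θ : ℝ) * Complex.I := by
    rw [e, hθ, Complex.exp_mul_I, ← Complex.ofReal_cos, ← Complex.ofReal_sin]
    push_cast
    ring
  have h2 : ‖e x - 1‖ ^ 2 = (Real.cos θ - 1) ^ 2 + Real.sin θ ^ 2 := by
    rw [h1, Complex.sq_norm, Complex.normSq_apply]
    simp [Complex.cos_ofReal_re, Complex.sin_ofReal_re]
    ring
  have h3 : (Real.cos θ - 1) ^ 2 + Real.sin θ ^ 2 = 2 - 2 * Real.cos θ := by
    have := Real.sin_sq_add_cos_sq θ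
    nlinarith
  have h4 : 2 - 2 * Real.cos θ ≤ θ ^ 2 := by
    have hs : Real.sin (θ / 2) ^ 2 = 1 / 2 - Real.cos (2 * (θ / 2)) / 2 :=
      Real.sin_sq_eq_half_sub _
    have hle : Real.sin (θ / 2) ^ 2 ≤ (θ / 2) ^ 2 := Real.sin_sq_le_sq
    rw [hs] at hle
    have : 2 * (θ / 2) = θ := by ring
    rw [this] at hle
    nlinarith
  have h5 : ‖e x - 1‖ ^ 2 ≤ θ ^ 2 := by rw [h2, h3]; exact h4
  have h6 : ‖e x - 1‖ ≤ |θ| := by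
    nlinarith [norm_nonneg (e x - 1), abs_nonneg θ, sq_abs θ,
      sq_nonneg (‖e x - 1‖ - |θ|), sq_nonneg (‖e x - 1‖ + |θ|)]
  calc ‖e x - 1‖ ≤ |θ| := h6
    _ = 2 * Real.pi * |x| := by
        rw [hθdef, abs_mul, abs_of_nonneg (by positivity : (0:ℝ) ≤ 2 * Real.pi)]

/-- Let `Φ(x) = (e(x) − 1)/(2πix)` for `x ≠ 0` and `Φ(0) = 1`
(the Fourier transform of the Haar scaling function). Then the series
`∑_{p ∈ ℤ} |Φ(x − p)|²` converges uniformly on `[0,1]`, and consequently there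
is `K ≥ 0` bounding the periodization everywhere. -/
theorem stmt_5 (Φ : ℝ → ℂ)
    (hΦ : ∀ x : ℝ,
      Φ x = if x = 0 then 1 else (e x - 1) / (2 * Real.pi * Complex.I * x)) :
    TendstoUniformlyOn
      (fun (s : Finset ℤ) (x : ℝ) => ∑ p ∈ s, ‖Φ (x - (p : ℝ))‖ ^ 2)
      (fun x => ∑' p : ℤ, ‖Φ (x - (p : ℝ))‖ ^ 2) atTop (Set.Icc 0 1) ∧
    ∃ K : ℝ, 0 ≤ K ∧ ∀ x : ℝ, ∑' p : ℤ, ‖Φ (x - (p : ℝ))‖ ^ 2 ≤ K := by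
  have hπ : (0:ℝ) < Real.pi := Real.pi_pos
  -- norm of the denominator
  have hden : ∀ y : ℝ, y ≠ 0 → ‖(2 * Real.pi * Complex.I * y : ℂ)‖ = 2 * Real.pi * |y| := by
    intro y hy
    rw [norm_mul, norm_mul, norm_mul]
    simp [Complex.norm_real, Real.norm_eq_abs, abs_of_nonneg hπ.le]
  -- |Φ y| ≤ 1
  have hb1 : ∀ y : ℝ, ‖Φ y‖ ≤ 1 := by
    intro y
    rw [hΦ]
    by_cases hy : y = 0
    · simp [hy]
    · rw [if_neg hy, norm_div, hden y hy]
      rw [div_le_one (by positivity)]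
      simpa using norm_e_sub_one_le_lin y
  -- |Φ y| ≤ 1/(π |y|) for y ≠ 0
  have hb2 : ∀ y : ℝ, y ≠ 0 → ‖Φ y‖ ≤ 1 / (Real.pi * |y|) := by
    intro y hy
    rw [hΦ, if_neg hy, norm_div, hden y hy]
    rw [div_le_div_iff₀ (by positivity) (by positivity)]
    have h2' : ‖e y - 1‖ * (Real.pi * |y|) ≤ 2 * (Real.pi * |y|) :=
      mul_le_mul_of_nonneg_right (norm_e_sub_one_le_two y) (by positivity)
    linarith
  -- the majorant
  set u : ℤ → ℝ := fun p => (if p.natAbs ≤ 1 then (1:ℝ) else 0) + 4 / Real.pi ^ 2 * (1 / (p:ℝ) ^ 2)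
    with hu_def
  have hu_nonneg : ∀ p, 0 ≤ u p := by
    intro p
    apply add_nonneg
    · split <;> norm_num
    · positivity
  have hu_sum : Summable u := by
    apply Summable.add
    · apply summable_of_ne_finset_zero (s := ({-1, 0, 1} : Finset ℤ))
      intro p hp
      simp only [Finset.mem_insert, Finset.mem_singleton] at hp
      push_neg at hp
      have : ¬ p.natAbs ≤ 1 := by omega
      simp [this]
    · exact (Real.summable_one_div_int_pow.mpr one_lt_two).mul_left _
  -- uniform bound on [0,1]
  have hbound : ∀ p : ℤ, ∀ x ∈ Set.Icc (0:ℝ) 1, ‖Φ (x - (p:ℝ))‖ ^ 2 ≤ u p := by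
    intro p x hx
    obtain ⟨hx0, hx1⟩ := hx
    by_cases hp : p.natAbs ≤ 1
    · have h := hb1 (x - p)
      have : ‖Φ (x - p)‖ ^ 2 ≤ 1 := by nlinarith [norm_nonneg (Φ (x - p))]
      calc ‖Φ (x - p)‖ ^ 2 ≤ 1 := this
        _ ≤ u p := by simp [hu_def, hp]; positivity
    · -- |p| ≥ 2, so |x - p| ≥ |p|/2
      have hp2 : 2 ≤ |(p:ℝ)| := by
        rw [← Int.cast_abs]
        have : 2 ≤ p.natAbs := by omega
        exact_mod_cast (by rw [Int.abs_eq_natAbs]; exact_mod_cast this : (2:ℤ) ≤ |p|)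
      have hxy : |(p:ℝ)| / 2 ≤ |x - (p:ℝ)| := by
        rcases abs_cases (p:ℝ) with ⟨h1, h2⟩ | ⟨h1, h2⟩
        · -- p ≥ 0, so p ≥ 2
          rw [abs_sub_comm, abs_of_nonneg (by nlinarith : (0:ℝ) ≤ (p:ℝ) - x)]
          nlinarith
        · -- p < 0
          rw [abs_of_nonneg (by nlinarith : (0:ℝ) ≤ x - (p:ℝ))]
          nlinarith
      have hyne : x - (p:ℝ) ≠ 0 := by
        intro h
        rw [h] at hxy
        simp at hxy
        nlinarith
      have h := hb2 _ hyne
      have hay : 0 < |x - (p:ℝ)| := abs_pos.mpr hyne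
      have h2 : ‖Φ (x - p)‖ ^ 2 ≤ (1 / (Real.pi * |x - (p:ℝ)|)) ^ 2 := by
        apply sq_le_sq'
        · nlinarith [norm_nonneg (Φ (x - p))]
        · exact h
      have hpne : (p:ℝ) ≠ 0 := by
        intro h
        rw [h] at hp2
        norm_num at hp2
      have hmono : Real.pi * (|(p:ℝ)| / 2) ≤ Real.pi * |x - (p:ℝ)| :=
        mul_le_mul_of_nonneg_left hxy hπ.le
      have h3a : (1 / (Real.pi * |x - (p:ℝ)|)) ^ 2 ≤ (1 / (Real.pi * (|(p:ℝ)| / 2))) ^ 2 := by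
        apply pow_le_pow_left₀ (by positivity)
        exact one_div_le_one_div_of_le (by positivity) hmono
      have heq : (1 / (Real.pi * (|(p:ℝ)| / 2))) ^ 2 = 4 / Real.pi ^ 2 * (1 / (p:ℝ) ^ 2) := by
        have hap : |(p:ℝ)| ^ 2 = (p:ℝ) ^ 2 := sq_abs _
        field_simp
        nlinarith [hap, hπ]
      have h3 : (1 / (Real.pi * |x - (p:ℝ)|)) ^ 2 ≤ 4 / Real.pi ^ 2 * (1 / (p:ℝ) ^ 2) := by
        rw [← heq]; exact h3a
      calc ‖Φ (x - p)‖ ^ 2 ≤ 4 / Real.pi ^ 2 * (1 / (p:ℝ) ^ 2) := le_trans h2 h3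
        _ ≤ u p := by simp [hu_def, hp]
  constructor
  · apply tendstoUniformlyOn_tsum hu_sum
    intro p x hx
    rw [Real.norm_eq_abs, abs_of_nonneg (by positivity)]
    exact hbound p x hx
  · refine ⟨∑' p, u p, tsum_nonneg hu_nonneg, ?_⟩
    intro x
    -- reduce to the fractional part via reindexing
    have key : ∑' p : ℤ, ‖Φ (x - (p : ℝ))‖ ^ 2
        = ∑' q : ℤ, ‖Φ (Int.fract x - (q : ℝ))‖ ^ 2 := by
      rw [← (Equiv.addRight (⌊x⌋ : ℤ)).tsum_eq (fun p : ℤ => ‖Φ (x - (p : ℝ))‖ ^ 2)]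
      apply tsum_congr
      intro q
      congr 2
      simp only [Equiv.coe_addRight]
      push_cast
      rw [Int.fract]
      ring
    rw [key]
    have hfr : Int.fract x ∈ Set.Icc (0:ℝ) 1 :=
      ⟨Int.fract_nonneg x, (Int.fract_lt_one x).le⟩
    apply Summable.tsum_le_tsum (fun p => hbound p _ hfr) _ hu_sum
    exact hu_sum.of_nonneg_of_le (fun p => by positivity) (fun p => hbound p _ hfr)
end

section
/- Let n ≥ 1 and let A be an n×n integer matrix with d := |det A| ≥ 1. Let β : Fin d → ℤⁿ be such that the induced map Fin d → ℤⁿ/A(ℤⁿ), i ↦ β(i) + A(ℤⁿ), is a bijection. Then for every b ∈ ℕ, the map (Fin d)^b → ℤⁿ/A^b(ℤⁿ) sending (i₀, i₁, …, i_{b−1}) to the class of ∑_{j=0}^{b−1} A^j(β(i_j)) modulo A^b(ℤⁿ) is a bijection. In particular, {∑_{j=0}^{b−1} A^j(β(i_j)) : i_j ∈ {0,…,d−1}} is a complete set of coset representatives for ℤⁿ/A^b(ℤⁿ). -/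
private lemma sum_decomp {n d b : ℕ} (A : Matrix (Fin n) (Fin n) ℤ)
    (β : Fin d → (Fin n → ℤ)) (i : Fin (b + 1) → Fin d) :
    ∑ j : Fin (b + 1), (A ^ (j : ℕ)).mulVec (β (i j)) =
      β (i 0) + A.mulVec (∑ j : Fin b, (A ^ (j : ℕ)).mulVec (β (i j.succ))) := by
  rw [Fin.sum_univ_succ]
  congr 1
  · simp
  · rw [show A.mulVec (∑ j : Fin b, (A ^ (j : ℕ)).mulVec (β (i j.succ)))
        = A.mulVecLin (∑ j : Fin b, (A ^ (j : ℕ)).mulVec (β (i j.succ))) from rfl,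
      map_sum]
    refine Finset.sum_congr rfl fun j _ => ?_
    simp [Matrix.mulVecLin_apply, Matrix.mulVec_mulVec, pow_succ']

/-- If `β : Fin d → ℤⁿ` is a complete set of coset
representatives for `ℤⁿ/A(ℤⁿ)` (where `d = |det A|`), then for every `b` the map
`(i₀,…,i_{b−1}) ↦ ∑_{j<b} A^j β(i_j) mod A^b(ℤⁿ)` is a bijection from
`(Fin d)^b` onto `ℤⁿ/A^b(ℤⁿ)`. -/
theorem stmt_7 (n : ℕ) (hn : 1 ≤ n) (A : Matrix (Fin n) (Fin n) ℤ)
    (d : ℕ) (hd : (d : ℤ) = |A.det|) (hd1 : 1 ≤ d)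
    (β : Fin d → (Fin n → ℤ))
    (hβ : Function.Bijective (fun i : Fin d =>
      (Submodule.Quotient.mk (β i) :
        (Fin n → ℤ) ⧸ LinearMap.range A.mulVecLin)))
    (b : ℕ) :
    Function.Bijective (fun i : Fin b → Fin d =>
      (Submodule.Quotient.mk (∑ j : Fin b, (A ^ (j : ℕ)).mulVec (β (i j))) :
        (Fin n → ℤ) ⧸ LinearMap.range (A ^ b).mulVecLin)) := by
  have hdet : A.det ≠ 0 := by
    intro h
    rw [h, abs_zero] at hd
    omega
  -- injectivity of mulVec A
  have hAinj : ∀ w : Fin n → ℤ, A.mulVec w = 0 → w = 0 := by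
    intro w hw
    have h2 := congrArg A.adjugate.mulVec hw
    rw [Matrix.mulVec_mulVec, Matrix.adjugate_mul, Matrix.smul_mulVec,
      Matrix.one_mulVec, Matrix.mulVec_zero] at h2
    rcases smul_eq_zero.mp h2 with h | h
    · exact absurd h hdet
    · exact h
  induction b with
  | zero =>
    constructor
    · intro i i' _
      exact Subsingleton.elim i i'
    · intro x
      refine ⟨fun j => j.elim0, ?_⟩
      have : LinearMap.range (A ^ 0).mulVecLin = ⊤ := by
        rw [pow_zero]
        ext v
        simp only [Submodule.mem_top, iff_true, LinearMap.mem_range]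
        exact ⟨v, by simp⟩
      have hsub : Subsingleton ((Fin n → ℤ) ⧸ LinearMap.range (A ^ 0).mulVecLin) :=
        Submodule.Quotient.subsingleton_iff.mpr this
      exact Subsingleton.elim _ _
  | succ b ih =>
    constructor
    · intro i i' h
      simp only at h
      rw [Submodule.Quotient.eq, LinearMap.mem_range] at h
      obtain ⟨v, hv⟩ := h
      rw [Matrix.mulVecLin_apply, sum_decomp A β i, sum_decomp A β i'] at hv
      set s := ∑ j : Fin b, (A ^ (j : ℕ)).mulVec (β (i j.succ)) with hs
      set s' := ∑ j : Fin b, (A ^ (j : ℕ)).mulVec (β (i' j.succ)) with hs'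
      have hpow : (A ^ (b + 1)).mulVec v = A.mulVec ((A ^ b).mulVec v) := by
        rw [Matrix.mulVec_mulVec, ← pow_succ']
      -- first coordinates equal
      have h0 : β (i 0) - β (i' 0) = A.mulVec ((A ^ b).mulVec v - s + s') := by
        have : A.mulVec ((A ^ b).mulVec v - s + s')
            = (A ^ (b + 1)).mulVec v - A.mulVec s + A.mulVec s' := by
          rw [hpow]
          simp [Matrix.mulVec_add, Matrix.mulVec_sub]
        rw [this, hv]
        abel
      have hi0 : i 0 = i' 0 := by
        apply hβ.injective
        simp only
        rw [Submodule.Quotient.eq, LinearMap.mem_range]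
        exact ⟨(A ^ b).mulVec v - s + s', h0.symm⟩
      -- tail equal
      have htail : Matrix.mulVec A (s - s' - (A ^ b).mulVec v) = 0 := by
        rw [Matrix.mulVec_sub, Matrix.mulVec_sub, ← hpow]
        rw [hi0] at hv
        linear_combination -hv
      have hss : s - s' = (A ^ b).mulVec v :=
        sub_eq_zero.mp (hAinj _ htail)
      have hitail : (fun j : Fin b => i j.succ) = (fun j : Fin b => i' j.succ) := by
        apply ih.injective
        simp only
        rw [Submodule.Quotient.eq, LinearMap.mem_range]
        exact ⟨v, hss.symm⟩
      funext j
      refine Fin.cases ?_ ?_ j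
      · exact hi0
      · intro k
        exact congrFun hitail k
    · intro x
      obtain ⟨y, rfl⟩ := Submodule.Quotient.mk_surjective _ x
      obtain ⟨i0, hi0⟩ := hβ.surjective (Submodule.Quotient.mk y)
      simp only [Submodule.Quotient.eq, LinearMap.mem_range] at hi0
      obtain ⟨z, hz⟩ := hi0
      obtain ⟨i', hi'⟩ := ih.surjective (Submodule.Quotient.mk (-z))
      simp only [Submodule.Quotient.eq, LinearMap.mem_range] at hi'
      obtain ⟨w, hw⟩ := hi'
      refine ⟨Fin.cons i0 i', ?_⟩
      simp only
      rw [Submodule.Quotient.eq, LinearMap.mem_range]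
      refine ⟨w, ?_⟩
      rw [Matrix.mulVecLin_apply, sum_decomp A β (Fin.cons i0 i')]
      simp only [Fin.cons_zero, Fin.cons_succ]
      rw [Matrix.mulVecLin_apply] at hz hw
      have h1 : A.mulVec (∑ j : Fin b, (A ^ (j : ℕ)).mulVec (β (i' j)))
          = (A ^ (b + 1)).mulVec w - A.mulVec z := by
        have hh : (∑ j : Fin b, (A ^ (j : ℕ)).mulVec (β (i' j)))
            = (A ^ b).mulVec w - z := by
          linear_combination -hw
        rw [hh, Matrix.mulVec_sub, Matrix.mulVec_mulVec, ← pow_succ']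
      rw [h1, hz]
      abel
end

section
/- Let x, y, z be integers with gcd(x, gcd(y, z)) = 1. Then there exists a matrix B ∈ SL(3, ℤ) (a 3×3 integer matrix with determinant 1), with entries B_{jk} for 1 ≤ j,k ≤ 3, such that B₂₂B₃₁ − B₂₁B₃₂ = x, B₂₃B₃₁ − B₂₁B₃₃ = y, and B₂₃B₃₂ − B₂₂B₃₃ = z. -/
/-- For integers `x, y, z` with `gcd(x, gcd(y, z)) = 1`, there
is a matrix `B ∈ SL(3,ℤ)` whose 2×2 minors formed from its last two rows are
`x`, `y`, `z` as specified. -/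
theorem stmt_11 (x y z : ℤ) (h : Int.gcd x (Int.gcd y z : ℤ) = 1) :
    ∃ B : Matrix (Fin 3) (Fin 3) ℤ, B.det = 1 ∧
      B 1 1 * B 2 0 - B 1 0 * B 2 1 = x ∧
      B 1 2 * B 2 0 - B 1 0 * B 2 2 = y ∧
      B 1 2 * B 2 1 - B 1 1 * B 2 2 = z := by
  by_cases hd0 : (Int.gcd y z : ℤ) = 0
  · -- then y = z = 0 and x * x = 1
    have hgcd0 : Int.gcd y z = 0 := by exact_mod_cast hd0
    have hy0 : y = 0 := (Int.gcd_eq_zero_iff.mp hgcd0).1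
    have hz0 : z = 0 := (Int.gcd_eq_zero_iff.mp hgcd0).2
    have hx : x * x = 1 := by
      rw [hd0] at h
      have hx1 : x.natAbs = 1 := by simpa [Int.gcd] using h
      rcases Int.natAbs_eq x with h1 | h1 <;> rw [h1] <;> simp [hx1]
    refine ⟨!![0, 0, -x; 0, 1, 0; x, 0, 0], ?_, ?_, ?_, ?_⟩
    · rw [Matrix.det_fin_three]
      simp [Matrix.vecHead, Matrix.vecTail]
      linarith [hx]
    · simp [Matrix.vecHead, Matrix.vecTail]
    · simp [Matrix.vecHead, Matrix.vecTail, hy0]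
    · simp [Matrix.vecHead, Matrix.vecTail, hz0]
  · have hdy : (Int.gcd y z : ℤ) ∣ y := Int.gcd_dvd_left y z
    have hdz : (Int.gcd y z : ℤ) ∣ z := Int.gcd_dvd_right y z
    have hy : (y / (Int.gcd y z : ℤ)) * (Int.gcd y z : ℤ) = y := Int.ediv_mul_cancel hdy
    have hz : (z / (Int.gcd y z : ℤ)) * (Int.gcd y z : ℤ) = z := Int.ediv_mul_cancel hdz
    have hpos : 0 < Int.gcd y z := by
      rcases Nat.eq_zero_or_pos (Int.gcd y z) with h0 | h0
      · exact absurd (by exact_mod_cast h0 : (Int.gcd y z : ℤ) = 0) hd0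
      · exact h0
    have hcop : Int.gcd (y / (Int.gcd y z : ℤ)) (z / (Int.gcd y z : ℤ)) = 1 :=
      Int.gcd_div_gcd_div_gcd hpos
    obtain ⟨s, t, hst⟩ := (Int.isCoprime_iff_gcd_eq_one.mpr hcop)
    obtain ⟨p, q, hpq⟩ := (Int.isCoprime_iff_gcd_eq_one.mpr h)
    have hgab : (Int.gcd y z : ℤ) = y * Int.gcdA y z + z * Int.gcdB y z :=
      Int.gcd_eq_gcd_ab y z
    refine ⟨!![-(q * Int.gcdB y z), q * Int.gcdA y z, -p;
               y / (Int.gcd y z : ℤ), z / (Int.gcd y z : ℤ), 0;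
               t * x, -(s * x), -(Int.gcd y z : ℤ)], ?_, ?_, ?_, ?_⟩
    · rw [Matrix.det_fin_three]
      simp [Matrix.vecHead, Matrix.vecTail]
      linear_combination (q * Int.gcdA y z) * hy + (q * Int.gcdB y z) * hz + hpq +
        (-q) * hgab + (p * x) * hst
    · simp [Matrix.vecHead, Matrix.vecTail]
      linear_combination x * hst
    · simp [Matrix.vecHead, Matrix.vecTail]
      linear_combination hy
    · simp [Matrix.vecHead, Matrix.vecTail]
      linear_combination hz
end

section
/- Let c₁, c₂, c₃ be integers, not all zero. Then there exist a positive integer a and a matrix B ∈ SL(3, ℤ) (a 3×3 integer matrix with determinant 1), with entries B_{jk} for 1 ≤ j,k ≤ 3, such that a·(B₂₂B₃₁ − B₂₁B₃₂) = c₁, a·(B₂₃B₃₁ − B₂₁B₃₃) = c₂, and a·(B₂₃B₃₂ − B₂₂B₃₃) = c₃. -/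
/-- Auxiliary: a primitive vector is realized exactly (with `a = 1`). -/
lemma key_stmt12 (d₁ d₂ d₃ : ℤ) (h : Int.gcd d₁ (Int.gcd d₂ d₃) = 1) :
    ∃ B : Matrix (Fin 3) (Fin 3) ℤ, B.det = 1 ∧
      (B 1 1 * B 2 0 - B 1 0 * B 2 1) = d₁ ∧
      (B 1 2 * B 2 0 - B 1 0 * B 2 2) = d₂ ∧
      (B 1 2 * B 2 1 - B 1 1 * B 2 2) = d₃ := by
  by_cases hg : Int.gcd d₂ d₃ = 0
  · obtain ⟨h2, h3⟩ := Int.gcd_eq_zero_iff.mp hg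
    rw [hg] at h
    have hd1 : d₁ * d₁ = 1 := by
      have : d₁.natAbs = 1 := by simpa using h
      rcases Int.natAbs_eq_iff.mp this with h1 | h1 <;> rw [h1] <;> ring
    refine ⟨!![0, 0, -d₁; 0, 1, 0; d₁, 0, 0], ?_, ?_, ?_, ?_⟩
    · rw [Matrix.det_fin_three]
      norm_num [Matrix.cons_val_one, Matrix.cons_val_zero, Matrix.head_cons,
        Matrix.vecHead, Matrix.vecTail, Matrix.cons_val_two]
      linear_combination hd1
    · norm_num [Matrix.cons_val_one, Matrix.cons_val_zero, Matrix.head_cons,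
        Matrix.vecHead, Matrix.vecTail, Matrix.cons_val_two]
    · norm_num [Matrix.cons_val_one, Matrix.cons_val_zero, Matrix.head_cons,
        Matrix.vecHead, Matrix.vecTail, Matrix.cons_val_two, h2]
    · norm_num [Matrix.cons_val_one, Matrix.cons_val_zero, Matrix.head_cons,
        Matrix.vecHead, Matrix.vecTail, Matrix.cons_val_two, h3]
  · set g : ℤ := (Int.gcd d₂ d₃ : ℤ) with hgdef
    have hgpos : 0 < Int.gcd d₂ d₃ := Nat.pos_of_ne_zero hg
    have hD2 : g * (d₂ / g) = d₂ := Int.mul_ediv_cancel' (Int.gcd_dvd_left _ _)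
    have hD3 : g * (d₃ / g) = d₃ := Int.mul_ediv_cancel' (Int.gcd_dvd_right _ _)
    set y₁ : ℤ := d₂ / g
    set y₂ : ℤ := d₃ / g
    have hyy : Int.gcd y₁ y₂ = 1 := Int.gcd_div_gcd_div_gcd hgpos
    -- Bézout for y₁, y₂
    have hpq : y₁ * Int.gcdA y₁ y₂ + y₂ * Int.gcdB y₁ y₂ = 1 := by
      have := Int.gcd_eq_gcd_ab y₁ y₂
      rw [hyy] at this; simpa using this.symm
    set p : ℤ := Int.gcdA y₁ y₂
    set q : ℤ := Int.gcdB y₁ y₂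
    -- Bézout for d₂, d₃
    have hPQ : d₂ * Int.gcdA d₂ d₃ + d₃ * Int.gcdB d₂ d₃ = g :=
      (Int.gcd_eq_gcd_ab d₂ d₃).symm
    set P : ℤ := Int.gcdA d₂ d₃
    set Q : ℤ := Int.gcdB d₂ d₃
    -- Bézout for d₁, g
    have hg1 : Int.gcd d₁ g = 1 := by simpa using h
    have hab : d₁ * Int.gcdA d₁ g + g * Int.gcdB d₁ g = 1 := by
      have := Int.gcd_eq_gcd_ab d₁ g
      rw [hg1] at this; simpa using this.symm
    set α : ℤ := Int.gcdA d₁ g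
    set β : ℤ := Int.gcdB d₁ g
    refine ⟨!![-β * Q, β * P, -α; -q * d₁, p * d₁, g; y₁, y₂, 0], ?_, ?_, ?_, ?_⟩
    · rw [Matrix.det_fin_three]
      norm_num [Matrix.cons_val_one, Matrix.cons_val_zero, Matrix.head_cons,
        Matrix.vecHead, Matrix.vecTail, Matrix.cons_val_two]
      linear_combination (β * Q) * hD3 + (β * P) * hD2 + β * hPQ + (α * d₁) * hpq + hab
    · norm_num [Matrix.cons_val_one, Matrix.cons_val_zero, Matrix.head_cons,
        Matrix.vecHead, Matrix.vecTail, Matrix.cons_val_two]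
      linear_combination d₁ * hpq
    · norm_num [Matrix.cons_val_one, Matrix.cons_val_zero, Matrix.head_cons,
        Matrix.vecHead, Matrix.vecTail, Matrix.cons_val_two]
      linear_combination hD2
    · norm_num [Matrix.cons_val_one, Matrix.cons_val_zero, Matrix.head_cons,
        Matrix.vecHead, Matrix.vecTail, Matrix.cons_val_two]
      linear_combination hD3

/-- For integers `c₁, c₂, c₃`, not all zero, there exist a
positive integer `a` and `B ∈ SL(3,ℤ)` such that `a` times the three 2×2 minors
of `B` formed from its last two rows equal `c₁`, `c₂`, `c₃` respectively. -/
theorem stmt_12 (c₁ c₂ c₃ : ℤ) (h : ¬(c₁ = 0 ∧ c₂ = 0 ∧ c₃ = 0)) :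
    ∃ a : ℤ, 0 < a ∧ ∃ B : Matrix (Fin 3) (Fin 3) ℤ, B.det = 1 ∧
      a * (B 1 1 * B 2 0 - B 1 0 * B 2 1) = c₁ ∧
      a * (B 1 2 * B 2 0 - B 1 0 * B 2 2) = c₂ ∧
      a * (B 1 2 * B 2 1 - B 1 1 * B 2 2) = c₃ := by
  set A : ℕ := Int.gcd c₁ (Int.gcd c₂ c₃) with hA
  have hApos : 0 < A := by
    rcases Nat.eq_zero_or_pos A with h0 | hp
    · exfalso
      have h1 : c₁ = 0 ∧ ((Int.gcd c₂ c₃ : ℤ)) = 0 := Int.gcd_eq_zero_iff.mp h0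
      have h23 : Int.gcd c₂ c₃ = 0 := by exact_mod_cast h1.2
      obtain ⟨h2, h3⟩ := Int.gcd_eq_zero_iff.mp h23
      exact h ⟨h1.1, h2, h3⟩
    · exact hp
  have ha1 : (A : ℤ) ∣ c₁ := Int.gcd_dvd_left _ _
  have hdvd23 : (A : ℤ) ∣ (Int.gcd c₂ c₃ : ℤ) := Int.gcd_dvd_right _ _
  have ha2 : (A : ℤ) ∣ c₂ := hdvd23.trans (Int.gcd_dvd_left _ _)
  have ha3 : (A : ℤ) ∣ c₃ := hdvd23.trans (Int.gcd_dvd_right _ _)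
  set d₁ : ℤ := c₁ / A
  set d₂ : ℤ := c₂ / A
  set d₃ : ℤ := c₃ / A
  have e1 : (A : ℤ) * d₁ = c₁ := Int.mul_ediv_cancel' ha1
  have e2 : (A : ℤ) * d₂ = c₂ := Int.mul_ediv_cancel' ha2
  have e3 : (A : ℤ) * d₃ = c₃ := Int.mul_ediv_cancel' ha3
  have hprim : Int.gcd d₁ (Int.gcd d₂ d₃) = 1 := by
    have h23 : Int.gcd c₂ c₃ = A * Int.gcd d₂ d₃ := by
      rw [← e2, ← e3, Int.gcd_mul_left]
      simp
    have h123 : A = A * Int.gcd d₁ (Int.gcd d₂ d₃) := by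
      conv_lhs => rw [hA, ← e1]
      rw [h23]
      push_cast
      rw [Int.gcd_mul_left]
      simp
    exact (mul_left_cancel₀ hApos.ne' (by rw [mul_one, ← h123])).symm
  obtain ⟨B, hdet, m1, m2, m3⟩ := key_stmt12 d₁ d₂ d₃ hprim
  exact ⟨(A : ℤ), by exact_mod_cast hApos, B, hdet,
    by rw [m1]; exact e1, by rw [m2]; exact e2, by rw [m3]; exact e3⟩
end

section
/- Let n ≥ 2, let d₁, …, d_n be integers with |d_i| > 1 for each i, let A = diag(d₁, …, d_n), and set d := ∏_{i=1}^{n} |d_i|. Fix a positive integer q, an integer a, and an index j with 1 ≤ j ≤ n−1. Let X denote the set of continuous functions h : ℝⁿ → ℂ such that h(x + e_i) = h(x) for all x ∈ ℝⁿ and all 1 ≤ i ≤ n−1, and h(x − q e_n) = e(a x_j) h(x) for all x ∈ ℝⁿ (where e_i denotes the i-th standard basis vector of ℝⁿ and x_j the j-th coordinate of x). Then there exists a continuous function γ : ℝⁿ → ℂ such that: (1) for all h₁, h₂ ∈ X and every x ∈ ℝⁿ, the family ( conj(h₁(x−v)γ(x−v)) · h₂(x−v)γ(x−v) )_{v ∈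 ℤⁿ} is absolutely summable with sum equal to ∑_{k=0}^{q−1} conj(h₁(x − k e_n)) · h₂(x − k e_n); and (2) for every h ∈ X there exists h' ∈ X with h(x)γ(x) = d^{−1/2} h'(A⁻¹x) γ(A⁻¹x) for all x ∈ ℝⁿ. -/
/-- Membership in the module `X(q,0,…,0,a_j,0,…,0)` realized as functions on
`ℝⁿ`: `h` is continuous, `1`-periodic in each of the first `n−1` coordinates,
and satisfies `h(x − q e_n) = e(a x_j) h(x)`, where `en` denotes the last
standard basis index. -/
def Xmod (n q : ℕ) (a : ℤ) (j en : Fin n) (h : (Fin n → ℝ) → ℂ) : Prop :=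
  Continuous h ∧
  (∀ (x : Fin n → ℝ) (i : Fin n), (i : ℕ) < n - 1 → h (x + Pi.single i 1) = h x) ∧
  (∀ x : Fin n → ℝ, h (x - (q : ℝ) • (Pi.single en 1 : Fin n → ℝ)) = e ((a : ℝ) * x j) * h x)

namespace S13

/-! ### the basic bump `pfun` and its square root `phi` -/

noncomputable def pfun (t : ℝ) : ℝ := max 0 (min 1 (2 - 3 * |t|))

noncomputable def phi (t : ℝ) : ℝ := Real.sqrt (pfun t)

lemma pfun_nonneg (t : ℝ) : 0 ≤ pfun t := le_max_left _ _

lemma pfun_continuous : Continuous pfun := by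
  unfold pfun
  fun_prop

lemma phi_continuous : Continuous phi :=
  Real.continuous_sqrt.comp pfun_continuous

lemma pfun_eq_one {t : ℝ} (h : |t| ≤ 1/3) : pfun t = 1 := by
  have : min 1 (2 - 3*|t|) = 1 := min_eq_left (by linarith)
  simp [pfun, this]

lemma pfun_eq_zero {t : ℝ} (h : 2/3 ≤ |t|) : pfun t = 0 := by
  have h1 : min 1 (2 - 3*|t|) ≤ 0 := le_trans (min_le_right _ _) (by linarith)
  exact max_eq_left h1

lemma abs_lt_of_pfun_ne_zero {t : ℝ} (h : pfun t ≠ 0) : |t| < 2/3 := by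
  by_contra hc
  exact h (pfun_eq_zero (by linarith [not_lt.mp hc]))

lemma phi_sq (t : ℝ) : phi t ^ 2 = pfun t := Real.sq_sqrt (pfun_nonneg t)

lemma phi_nonneg (t : ℝ) : 0 ≤ phi t := Real.sqrt_nonneg _

lemma phi_eq_zero_iff {t : ℝ} : phi t = 0 ↔ pfun t = 0 := by
  rw [phi, Real.sqrt_eq_zero (pfun_nonneg t)]

lemma phi_eq_one {t : ℝ} (h : |t| ≤ 1/3) : phi t = 1 := by
  rw [phi, pfun_eq_one h, Real.sqrt_one]

lemma phi_eq_zero {t : ℝ} (h : 2/3 ≤ |t|) : phi t = 0 := by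
  rw [phi, pfun_eq_zero h, Real.sqrt_zero]

lemma abs_lt_of_phi_ne_zero {t : ℝ} (h : phi t ≠ 0) : |t| < 2/3 :=
  abs_lt_of_pfun_ne_zero (fun h0 => h (phi_eq_zero_iff.mpr h0))

lemma pfun_add_pfun {θ : ℝ} (h0 : 0 ≤ θ) (h1 : θ < 1) : pfun θ + pfun (θ - 1) = 1 := by
  have e1 : |θ| = θ := abs_of_nonneg h0
  have e2 : |θ - 1| = 1 - θ := by rw [abs_of_nonpos (by linarith)]; ring
  unfold pfun
  rw [e1, e2]
  rcases le_or_gt θ (1/3) with hc | hc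
  · rw [min_eq_left (by linarith), max_eq_right (by norm_num),
      min_eq_right (by linarith), max_eq_left (by linarith)]
    norm_num
  · rcases le_or_gt θ (2/3) with hc2 | hc2
    · rw [min_eq_right (by linarith), max_eq_right (by linarith),
        min_eq_right (by linarith), max_eq_right (by linarith)]
      ring
    · rw [min_eq_right (by linarith), max_eq_left (by linarith),
        min_eq_left (by linarith), max_eq_right (by linarith)]
      ring

/-! ### lemmas about `e` -/

lemma e_add (r s : ℝ) : e (r + s) = e r * e s := by
  rw [e, e, e, ← Complex.exp_add]
  push_cast
  ring_nf

lemma e_zero : e 0 = 1 := by simp [e]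

lemma e_int (m : ℤ) : e m = 1 := by
  rw [e, show (2 * (Real.pi:ℂ) * Complex.I * ((m:ℝ):ℂ)) = (m:ℤ) * (2 * Real.pi * Complex.I) by push_cast; ring,
    Complex.exp_int_mul_two_pi_mul_I]

lemma e_conj (r : ℝ) : (starRingEnd ℂ) (e r) = e (-r) := by
  have h : (starRingEnd ℂ) (2 * (Real.pi:ℂ) * Complex.I * ((r:ℝ):ℂ))
      = 2 * (Real.pi:ℂ) * Complex.I * ((-r:ℝ):ℂ) := by
    simp only [map_mul, Complex.conj_I, Complex.conj_ofReal, map_ofNat]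
    push_cast
    ring
  rw [e, e, ← Complex.exp_conj, h]

lemma e_conj_mul_self (r : ℝ) : (starRingEnd ℂ) (e r) * e r = 1 := by
  rw [e_conj, ← e_add, neg_add_cancel, e_zero]

lemma e_ne_zero (r : ℝ) : e r ≠ 0 := Complex.exp_ne_zero _

lemma e_continuous {α : Type*} [TopologicalSpace α] {f : α → ℝ} (hf : Continuous f) :
    Continuous (fun x => e (f x)) :=
  Complex.continuous_exp.comp (by fun_prop)

lemma e_norm (r : ℝ) : ‖e r‖ = 1 := by
  rw [e]
  rw [show (2 * (Real.pi:ℂ) * Complex.I * ((r:ℝ):ℂ)) = ((2 * Real.pi * r : ℝ) : ℂ) * Complex.I by push_cast; ring]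
  exact Complex.norm_exp_ofReal_mul_I _

/-! ### round lemmas -/

lemma round_eq_int {r : ℝ} {m : ℤ} (h : |r - m| < 1/2) : round r = m := by
  rw [round_eq, Int.floor_eq_iff]
  rw [abs_lt] at h
  constructor <;> [skip; push_cast] <;> linarith [h.1, h.2]

lemma round_eq_zero {r : ℝ} (h : |r| < 1/2) : round r = 0 := by
  apply round_eq_int; simpa using h

lemma int_add_half_abs (z : ℤ) : (1:ℝ)/2 ≤ |(z:ℝ) + 1/2| := by
  rcases le_or_gt 0 z with hz | hz
  · rw [abs_of_nonneg (by positivity)]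
    have : (0:ℝ) ≤ z := by exact_mod_cast hz
    linarith
  · have hz1 : z ≤ -1 := by omega
    have hz' : (z:ℝ) ≤ -1 := by exact_mod_cast hz1
    rw [abs_of_nonpos (by linarith)]
    linarith

/-! ### the periodized blocks -/

noncomputable def blk (d : ℤ) (t : ℝ) : ℝ := phi (d * (t - round t))

noncomputable def blkP (d c : ℤ) (p : ℝ × ℝ) : ℂ :=
  e ((c : ℝ) * p.2 * (round p.1 : ℤ)) * ((phi ((d:ℝ) * (p.1 - round p.1)) : ℝ) : ℂ)

lemma blk_add_one (d : ℤ) (t : ℝ) : blk d (t + 1) = blk d t := by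
  unfold blk
  rw [show (t + 1 : ℝ) = t + ((1:ℤ):ℝ) by norm_num, round_add_intCast]
  push_cast
  ring_nf

lemma blk_eq_of_lt {d : ℤ} (hd : 1 < |d|) {t : ℝ} (ht : |t| < 2/3) :
    blk d t = phi (d * t) := by
  have hd2 : (2:ℝ) ≤ |(d:ℝ)| := by
    rw [show ((d:ℝ)) = ((d:ℤ):ℝ) from rfl, ← Int.cast_abs]
    exact_mod_cast hd
  rcases lt_or_ge (|t|) (1/2) with h | h
  · rw [blk, round_eq_zero h]
    push_cast
    ring_nf
  · have h1 : phi ((d:ℝ) * t) = 0 := by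
      apply phi_eq_zero
      rw [abs_mul]
      nlinarith
    have h2 : blk d t = 0 := by
      apply phi_eq_zero
      rw [abs_mul]
      rcases eq_or_ne (round t) 0 with hr | hr
      · rw [hr]
        push_cast
        simp only [sub_zero]
        nlinarith
      · have : (1:ℝ) ≤ |(round t : ℝ)| := by
          rw [← Int.cast_abs]
          exact_mod_cast Int.one_le_abs hr
        have h3 : (1:ℝ)/3 ≤ |t - round t| := by
          have := abs_sub_abs_le_abs_sub (round t : ℝ) t
          have habs : |(round t : ℝ) - t| = |t - round t| := abs_sub_comm _ _
          linarith [abs_abs_sub_abs_le_abs_sub (round t : ℝ) t, ht]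
      
        nlinarith
    rw [h1, h2]

lemma blk_continuous {d : ℤ} (hd : 1 < |d|) : Continuous (blk d) := by
  have hd2 : (2:ℝ) ≤ |(d:ℝ)| := by
    rw [← Int.cast_abs]; exact_mod_cast hd
  rw [continuous_iff_continuousAt]
  intro t₀
  rcases lt_or_ge (|t₀ - round t₀|) (1/2) with h | h
  · -- round is locally constant
    have hev : ∀ᶠ t in nhds t₀, blk d t = phi (d * (t - round t₀)) := by
      filter_upwards [Metric.ball_mem_nhds t₀ (by linarith : (0:ℝ) < 1/2 - |t₀ - round t₀|)] with t ht
      rw [Real.ball_eq_Ioo] at ht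
      have : |t - round t₀| < 1/2 := by
        rw [abs_lt]
        rcases ht with ⟨h1, h2⟩
        have l1 := le_abs_self (t₀ - (round t₀ : ℝ))
        have l2 := neg_abs_le (t₀ - (round t₀ : ℝ))
        constructor <;> linarith
      rw [blk, round_eq_int this]
    apply ContinuousAt.congr _ (Filter.EventuallyEq.symm hev)
    exact (phi_continuous.comp (by fun_prop)).continuousAt
  · -- t₀ is a half-integer; blk vanishes nearby
    have h' : |t₀ - round t₀| = 1/2 := le_antisymm (abs_sub_round t₀) h
    have hev : ∀ᶠ t in nhds t₀, blk d t = 0 := by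
      filter_upwards [Metric.ball_mem_nhds t₀ (by norm_num : (0:ℝ) < 1/6)] with t ht
      rw [Real.ball_eq_Ioo] at ht
      -- |t - m| ≥ 1/2 - 1/6 for every integer m
      have key : (1:ℝ)/3 ≤ |t - round t| := by
        have h5 : ∀ m : ℤ, (1:ℝ)/2 ≤ |t₀ - m| := by
          intro m
          rcases abs_eq (by norm_num : (0:ℝ) ≤ 1/2) |>.mp h' with hh | hh
          · have : t₀ - m = ((round t₀ - m : ℤ):ℝ) + 1/2 := by push_cast; linarith
            rw [this]; exact int_add_half_abs _
          · have : -(t₀ - m) = ((m - round t₀ : ℤ):ℝ) + 1/2 := by push_cast; linarith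
            rw [← abs_neg, this]; exact int_add_half_abs _
        have h6 := h5 (round t)
        have h7 : |t - t₀| < 1/6 := by
          rw [abs_lt]; rcases ht with ⟨h1, h2⟩; constructor <;> linarith
        have := abs_sub_abs_le_abs_sub (t₀ - round t) (t - round t)
        have h8 : |t₀ - round t - (t - round t)| = |t₀ - t| := by ring_nf
        rw [abs_sub_comm] at h7
        calc (1:ℝ)/3 = 1/2 - 1/6 := by norm_num
        _ ≤ |t₀ - round t| - |t₀ - t| := by linarith
        _ ≤ |t - round t| := by
            have := abs_sub_abs_le_abs_sub (t₀ - round t) (t₀ - t)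
            have h9 : t₀ - round t - (t₀ - t) = t - round t := by ring
            rw [h9] at this
            linarith
      apply phi_eq_zero
      rw [abs_mul]
      nlinarith
    have h0 : blk d t₀ = 0 := by
      apply phi_eq_zero
      rw [abs_mul, h']
      nlinarith
    rw [ContinuousAt, h0]
    exact Filter.Tendsto.congr' (Filter.EventuallyEq.symm hev) tendsto_const_nhds
lemma blkP_sub_one (d c : ℤ) (r u : ℝ) :
    blkP d c (r - 1, u) = e (-((c:ℝ) * u)) * blkP d c (r, u) := by
  unfold blkP
  simp only
  rw [show (r - 1 : ℝ) = r + ((-1:ℤ):ℝ) by push_cast; ring, round_add_intCast]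
  have h1 : ((c:ℝ) * u * ((round r + -1 : ℤ):ℝ)) = -((c:ℝ)*u) + (c:ℝ) * u * ((round r : ℤ):ℝ) := by
    push_cast; ring
  rw [h1, e_add]
  have h2 : ((d:ℝ) * (r + ((-1:ℤ):ℝ) - ((round r + -1 : ℤ):ℝ))) = (d:ℝ) * (r - round r) := by
    push_cast; ring
  rw [h2]
  ring

lemma blkP_snd_add_one (d c : ℤ) (r u : ℝ) :
    blkP d c (r, u + 1) = blkP d c (r, u) := by
  unfold blkP
  simp only
  rw [show ((c:ℝ) * (u+1) * ((round r : ℤ):ℝ)) = (c:ℝ) * u * ((round r : ℤ):ℝ) + ((c * round r : ℤ):ℝ) by push_cast; ring,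
    e_add, e_int]
  ring

lemma blkP_eq_of_lt {d : ℤ} (hd : 1 < |d|) {r : ℝ} (hr : |r| < 2/3) (c : ℤ) (u : ℝ) :
    blkP d c (r, u) = ((phi ((d:ℝ) * r) : ℝ) : ℂ) := by
  have hd2 : (2:ℝ) ≤ |(d:ℝ)| := by rw [← Int.cast_abs]; exact_mod_cast hd
  rcases lt_or_ge (|r|) (1/2) with h | h
  · rw [blkP]
    simp only
    rw [round_eq_zero h]
    push_cast
    rw [show ((c:ℝ) * u * (0:ℝ)) = 0 by ring, e_zero]
    ring_nf
  · have h1 : phi ((d:ℝ) * r) = 0 := by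
      apply phi_eq_zero; rw [abs_mul]; nlinarith
    have h2 : phi ((d:ℝ) * (r - round r)) = 0 := by
      apply phi_eq_zero
      rw [abs_mul]
      rcases eq_or_ne (round r) 0 with hr0 | hr0
      · rw [hr0]; push_cast; simp only [sub_zero]; nlinarith
      · have hb : (1:ℝ) ≤ |(round r : ℝ)| := by
          rw [← Int.cast_abs]; exact_mod_cast Int.one_le_abs hr0
        have h3 : (1:ℝ)/3 ≤ |r - round r| := by
          have := abs_sub_abs_le_abs_sub ((round r : ℤ):ℝ) r
          have h4 : |((round r : ℤ):ℝ) - r| = |r - round r| := abs_sub_comm _ _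
          rw [h4] at this
          linarith
        nlinarith
    rw [blkP]
    simp only
    rw [h1, h2]
    simp

lemma blkP_norm_le (d c : ℤ) (p : ℝ × ℝ) : ‖blkP d c p‖ ≤ 1 := by
  rw [blkP, norm_mul, e_norm, one_mul, Complex.norm_real, Real.norm_eq_abs]
  rw [abs_of_nonneg (phi_nonneg _), phi]
  rw [show (1:ℝ) = Real.sqrt 1 by simp]
  apply Real.sqrt_le_sqrt
  exact max_le (by norm_num) (min_le_left _ _)

lemma blkP_continuous {d : ℤ} (hd : 1 < |d|) (c : ℤ) : Continuous (blkP d c) := by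
  have hd2 : (2:ℝ) ≤ |(d:ℝ)| := by rw [← Int.cast_abs]; exact_mod_cast hd
  rw [continuous_iff_continuousAt]
  intro p₀
  obtain ⟨r₀, u₀⟩ := p₀
  rcases lt_or_ge (|r₀ - round r₀|) (1/2) with h | h
  · have hmem : {p : ℝ × ℝ | |p.1 - r₀| < 1/2 - |r₀ - round r₀|} ∈ nhds (r₀, u₀) := by
      have : IsOpen {p : ℝ × ℝ | |p.1 - r₀| < 1/2 - |r₀ - round r₀|} := by
        have : Continuous (fun p : ℝ × ℝ => |p.1 - r₀|) := by fun_prop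
        exact isOpen_lt this continuous_const
      exact this.mem_nhds (by simp only [Set.mem_setOf_eq, sub_self, abs_zero]; linarith)
    have hev : ∀ᶠ p : ℝ × ℝ in nhds (r₀, u₀),
        blkP d c p = e ((c:ℝ) * p.2 * ((round r₀ : ℤ):ℝ)) * ((phi ((d:ℝ) * (p.1 - round r₀)) : ℝ) : ℂ) := by
      filter_upwards [hmem] with p hp
      have hround : round p.1 = round r₀ := by
        apply round_eq_int
        have l1 := le_abs_self (r₀ - (round r₀ : ℝ))
        have l2 := neg_abs_le (r₀ - (round r₀ : ℝ))
        rw [abs_lt] at hp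
        rw [abs_lt]
        constructor <;> linarith
      rw [blkP, hround]
    apply ContinuousAt.congr _ (Filter.EventuallyEq.symm hev)
    apply ContinuousAt.mul
    · exact (e_continuous (by fun_prop)).continuousAt
    · exact (Complex.continuous_ofReal.comp (phi_continuous.comp (by fun_prop))).continuousAt
  · have h' : |r₀ - round r₀| = 1/2 := le_antisymm (abs_sub_round r₀) h
    have hmem : {p : ℝ × ℝ | |p.1 - r₀| < 1/6} ∈ nhds (r₀, u₀) := by
      have : IsOpen {p : ℝ × ℝ | |p.1 - r₀| < 1/6} := by
        have : Continuous (fun p : ℝ × ℝ => |p.1 - r₀|) := by fun_prop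
        exact isOpen_lt this continuous_const
      exact this.mem_nhds (by simp only [Set.mem_setOf_eq, sub_self, abs_zero]; norm_num)
    have hev : ∀ᶠ p : ℝ × ℝ in nhds (r₀, u₀), blkP d c p = 0 := by
      filter_upwards [hmem] with p hp
      have key : (1:ℝ)/3 ≤ |p.1 - round p.1| := by
        have h5 : ∀ m : ℤ, (1:ℝ)/2 ≤ |r₀ - m| := by
          intro m
          rcases abs_eq (by norm_num : (0:ℝ) ≤ 1/2) |>.mp h' with hh | hh
          · have : r₀ - m = ((round r₀ - m : ℤ):ℝ) + 1/2 := by push_cast; linarith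
            rw [this]; exact int_add_half_abs _
          · have : -(r₀ - m) = ((m - round r₀ : ℤ):ℝ) + 1/2 := by push_cast; linarith
            rw [← abs_neg, this]; exact int_add_half_abs _
        have h6 := h5 (round p.1)
        have := abs_sub_abs_le_abs_sub (r₀ - round p.1) (r₀ - p.1)
        have h9 : r₀ - round p.1 - (r₀ - p.1) = p.1 - round p.1 := by ring
        rw [h9] at this
        have h10 : |r₀ - p.1| < 1/6 := by rw [abs_sub_comm]; exact hp
        linarith
      rw [blkP]
      have : phi ((d:ℝ) * (p.1 - round p.1)) = 0 := by
        apply phi_eq_zero; rw [abs_mul]; nlinarith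
      rw [this]
      simp
    have h0 : blkP d c (r₀, u₀) = 0 := by
      rw [blkP]
      simp only
      have : phi ((d:ℝ) * (r₀ - round r₀)) = 0 := by
        apply phi_eq_zero; rw [abs_mul, h']; nlinarith
      rw [this]
      simp
    rw [ContinuousAt, h0]
    exact Filter.Tendsto.congr' (Filter.EventuallyEq.symm hev) tendsto_const_nhds
/-! ### the window function `gamR` and the phase-corrected dilate `Gam` -/

noncomputable def cc (q : ℕ) {n : ℕ} (en i : Fin n) : ℝ := if i = en then (q:ℝ) else 1

noncomputable def gamR (q : ℕ) {n : ℕ} (en : Fin n) (x : Fin n → ℝ) : ℝ :=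
  ∏ i, phi (x i / cc q en i)

noncomputable def Gam (q : ℕ) {n : ℕ} (dv : Fin n → ℤ) (c : ℤ) (en j : Fin n)
    (y : Fin n → ℝ) : ℂ :=
  (∏ i ∈ Finset.univ.erase en, ((blk (dv i) (y i) : ℝ) : ℂ)) *
    blkP (dv en) c (y en / q, y j)

section Params

variable {n : ℕ} {q : ℕ} {dv : Fin n → ℤ} {c : ℤ} {en j : Fin n}

lemma cc_pos (hq : 0 < q) (i : Fin n) : 0 < cc q en i := by
  unfold cc
  split
  · exact_mod_cast hq
  · norm_num

lemma gamR_nonneg (x : Fin n → ℝ) : 0 ≤ gamR q en x :=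
  Finset.prod_nonneg fun i _ => phi_nonneg _

lemma gamR_continuous (hq : 0 < q) : Continuous (gamR q en) := by
  apply continuous_finset_prod
  intro i _
  exact phi_continuous.comp (by fun_prop)

lemma gamR_le_one (x : Fin n → ℝ) : gamR q en x ≤ 1 := by
  apply Finset.prod_le_one (fun i _ => phi_nonneg _)
  intro i _
  rw [phi, show (1:ℝ) = Real.sqrt 1 by simp]
  exact Real.sqrt_le_sqrt (max_le (by norm_num) (min_le_left _ _))

lemma Gam_continuous (hq : 0 < q) (hdv : ∀ i, 1 < |dv i|) : Continuous (Gam q dv c en j) := by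
  apply Continuous.mul
  · apply continuous_finset_prod
    intro i _
    exact Complex.continuous_ofReal.comp ((blk_continuous (hdv i)).comp (continuous_apply i))
  · exact (blkP_continuous (hdv en) c).comp (by fun_prop)

/-- the key identity `Γ(y)·γ(y) = γ(Ay)` -/
lemma Gam_mul_gamR (hq : 0 < q) (hdv : ∀ i, 1 < |dv i|) (y : Fin n → ℝ) :
    Gam q dv c en j y * ((gamR q en y : ℝ) : ℂ) =
      ((gamR q en (fun i => (dv i : ℝ) * y i) : ℝ) : ℂ) := by
  have hd2 : ∀ i, (2:ℝ) ≤ |(dv i : ℝ)| := by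
    intro i
    rw [← Int.cast_abs]; exact_mod_cast hdv i
  have hccpos : ∀ i : Fin n, 0 < cc q en i := cc_pos hq
  by_cases h0 : gamR q en y = 0
  · -- some factor of γ(y) vanishes, hence γ(Ay) = 0 too
    obtain ⟨i, _, hi⟩ := Finset.prod_eq_zero_iff.mp h0
    have h23 : 2/3 ≤ |y i / cc q en i| := by
      by_contra hc
      push_neg at hc
      rw [phi_eq_zero_iff] at hi
      have hpos : 0 < pfun (y i / cc q en i) :=
        lt_of_lt_of_le (lt_min (by norm_num) (by unfold pfun at *; linarith)) (le_max_right _ _)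
      exact hpos.ne' hi
    have hAy : gamR q en (fun i => (dv i : ℝ) * y i) = 0 := by
      apply Finset.prod_eq_zero (Finset.mem_univ i)
      apply phi_eq_zero
      rw [show ((dv i : ℝ) * y i) / cc q en i = (dv i : ℝ) * (y i / cc q en i) by ring, abs_mul]
      nlinarith [hd2 i, abs_nonneg (y i / cc q en i)]
    rw [h0, hAy]
    simp
  · have hne : ∀ i : Fin n, phi (y i / cc q en i) ≠ 0 :=
      fun i => Finset.prod_ne_zero_iff.mp h0 i (Finset.mem_univ i)
    have hlt : ∀ i : Fin n, |y i / cc q en i| < 2/3 :=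
      fun i => abs_lt_of_phi_ne_zero (hne i)
    -- Γ(y) = γ(Ay)
    have hGam : Gam q dv c en j y = ((gamR q en (fun i => (dv i : ℝ) * y i) : ℝ) : ℂ) := by
      have hen : |y en / (q:ℝ)| < 2/3 := by
        have := hlt en
        rwa [cc, if_pos rfl] at this
      rw [Gam, blkP_eq_of_lt (hdv en) hen]
      have hprod : ∀ i ∈ Finset.univ.erase en,
          ((blk (dv i) (y i) : ℝ) : ℂ) = ((phi (((dv i : ℝ) * y i) / cc q en i) : ℝ) : ℂ) := by
        intro i hi
        have hie : i ≠ en := Finset.ne_of_mem_erase hi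
        have hcc : cc q en i = 1 := by rw [cc, if_neg hie]
        have h1 : |y i| < 2/3 := by
          have := hlt i
          rwa [hcc, div_one] at this
        rw [blk_eq_of_lt (hdv i) h1, hcc, div_one]
      rw [Finset.prod_congr rfl hprod]
      have hfin : phi ((dv en : ℝ) * (y en / (q:ℝ))) = phi (((dv en : ℝ) * y en) / cc q en en) := by
        rw [cc, if_pos rfl, mul_div_assoc]
      rw [hfin]
      rw [gamR, ← Finset.prod_erase_mul Finset.univ _ (Finset.mem_univ en)]
      push_cast
      ring
    rw [hGam]
    -- now γ(Ay)·γ(y) = γ(Ay)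
    rw [show ∀ A B : ℝ, ((A:ℂ) * B = A) ↔ (A * B = A) from fun A B => by
      constructor
      · intro hh; exact_mod_cast hh
      · intro hh; exact_mod_cast congrArg (Complex.ofReal) hh]
    by_cases hA : gamR q en (fun i => (dv i : ℝ) * y i) = 0
    · rw [hA]; ring
    · have hAne : ∀ i : Fin n, phi (((dv i : ℝ) * y i) / cc q en i) ≠ 0 :=
        fun i => Finset.prod_ne_zero_iff.mp hA i (Finset.mem_univ i)
      have hone : gamR q en y = 1 := by
        apply Finset.prod_eq_one
        intro i _
        apply phi_eq_one
        have h1 : |((dv i : ℝ) * y i) / cc q en i| < 2/3 := abs_lt_of_phi_ne_zero (hAne i)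
        rw [show ((dv i : ℝ) * y i) / cc q en i = (dv i : ℝ) * (y i / cc q en i) by ring,
          abs_mul] at h1
        nlinarith [hd2 i, abs_nonneg (y i / cc q en i)]
      rw [hone]; ring
end Params
section Params2

variable {n : ℕ} {q : ℕ} {dv : Fin n → ℤ} {c : ℤ} {en j : Fin n}

lemma Gam_add_single (hij : j ≠ en) {i : Fin n} (hi : i ≠ en) (y : Fin n → ℝ) :
    Gam q dv c en j (y + (Pi.single i 1 : Fin n → ℝ)) = Gam q dv c en j y := by
  unfold Gam
  have hen : (y + (Pi.single i 1 : Fin n → ℝ)) en = y en := by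
    simp [Pi.single_apply, (Ne.symm hi)]
  have hprod : ∀ k ∈ Finset.univ.erase en,
      ((blk (dv k) ((y + (Pi.single i 1 : Fin n → ℝ)) k) : ℝ) : ℂ) = ((blk (dv k) (y k) : ℝ) : ℂ) := by
    intro k _
    rcases eq_or_ne k i with h' | hk
    · subst h'
      have hv : (y + (Pi.single k 1 : Fin n → ℝ)) k = y k + 1 := by simp
      rw [hv, blk_add_one]
    · simp [Pi.single_apply, hk]
  rw [Finset.prod_congr rfl hprod, hen]
  rcases eq_or_ne j i with rfl | hji
  · have : (y + (Pi.single j 1 : Fin n → ℝ)) j = y j + 1 := by simp [Pi.single_apply]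
    rw [this, blkP_snd_add_one]
  · have : (y + (Pi.single i 1 : Fin n → ℝ)) j = y j := by simp [Pi.single_apply, hji]
    rw [this]

lemma Gam_sub_q (hq : 0 < q) (hij : j ≠ en) (y : Fin n → ℝ) :
    Gam q dv c en j (y - (q:ℝ) • (Pi.single en 1 : Fin n → ℝ)) =
      e (-((c:ℝ) * y j)) * Gam q dv c en j y := by
  unfold Gam
  have hqne : (q:ℝ) ≠ 0 := by positivity
  have hen : (y - (q:ℝ) • (Pi.single en 1 : Fin n → ℝ)) en = y en - q := by
    simp [Pi.single_apply]
  have hjv : (y - (q:ℝ) • (Pi.single en 1 : Fin n → ℝ)) j = y j := by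
    simp [Pi.single_apply, hij]
  have hprod : ∀ k ∈ Finset.univ.erase en,
      ((blk (dv k) ((y - (q:ℝ) • (Pi.single en 1 : Fin n → ℝ)) k) : ℝ) : ℂ) =
        ((blk (dv k) (y k) : ℝ) : ℂ) := by
    intro k hk
    have hkne : k ≠ en := Finset.ne_of_mem_erase hk
    simp [Pi.single_apply, hkne]
  rw [Finset.prod_congr rfl hprod, hen, hjv]
  have hr : (y en - q) / q = y en / q - 1 := by field_simp
  rw [hr, blkP_sub_one]
  ring

end Params2

/-! ### integer-shift lemmas for members of `Xmod` -/

section Shifts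

variable {n q : ℕ} {a : ℤ} {j en : Fin n} {h : (Fin n → ℝ) → ℂ}

lemma shift1 (hX : Xmod n q a j en h) {i : Fin n} (hi : (i : ℕ) < n - 1)
    (m : ℤ) (x : Fin n → ℝ) : h (x + (m:ℝ) • (Pi.single i 1 : Fin n → ℝ)) = h x := by
  induction m using Int.induction_on with
  | zero => simp
  | succ k ih =>
    have harg : x + ((k+1 : ℤ):ℝ) • (Pi.single i 1 : Fin n → ℝ)
        = (x + ((k:ℤ):ℝ) • (Pi.single i 1 : Fin n → ℝ)) + (Pi.single i 1 : Fin n → ℝ) := by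
      push_cast
      module
    rw [harg, hX.2.1 _ i hi, ih]
  | pred k ih =>
    have harg : x + ((-(k:ℤ)-1 : ℤ):ℝ) • (Pi.single i 1 : Fin n → ℝ) + (Pi.single i 1 : Fin n → ℝ)
        = x + ((-(k:ℤ) : ℤ):ℝ) • (Pi.single i 1 : Fin n → ℝ) := by
      push_cast
      module
    have h2 := hX.2.1 (x + ((-(k:ℤ)-1 : ℤ):ℝ) • (Pi.single i 1 : Fin n → ℝ)) i hi
    rw [harg] at h2
    exact h2.symm.trans ih

lemma shift_en (hX : Xmod n q a j en h) (hj : j ≠ en) (m : ℤ) (x : Fin n → ℝ) :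
    h (x - ((q:ℝ) * m) • (Pi.single en 1 : Fin n → ℝ)) = e ((m:ℝ) * ((a:ℝ) * x j)) * h x := by
  have hbase : ∀ z : Fin n → ℝ, h (z - (q:ℝ) • (Pi.single en 1 : Fin n → ℝ))
      = e ((a:ℝ) * z j) * h z := hX.2.2
  have hjz : ∀ (z : Fin n → ℝ) (r : ℝ), (z - r • (Pi.single en 1 : Fin n → ℝ)) j = z j := by
    intro z r
    simp [Pi.single_apply, hj]
  induction m using Int.induction_on with
  | zero => simp [e_zero]
  | succ k ih =>
    have harg : x - ((q:ℝ) * ((k:ℝ)+1)) • (Pi.single en 1 : Fin n → ℝ)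
        = (x - ((q:ℝ) * (k:ℝ)) • (Pi.single en 1 : Fin n → ℝ))
            - (q:ℝ) • (Pi.single en 1 : Fin n → ℝ) := by
      module
    push_cast
    push_cast at ih
    rw [harg, hbase, hjz, ih, ← mul_assoc, ← e_add,
      show (a:ℝ) * x j + (k:ℝ) * ((a:ℝ) * x j) = ((k:ℝ)+1) * ((a:ℝ) * x j) by ring]
  | pred k ih =>
    have harg : (x - ((q:ℝ) * (-(k:ℝ)-1)) • (Pi.single en 1 : Fin n → ℝ))
          - (q:ℝ) • (Pi.single en 1 : Fin n → ℝ)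
        = x - ((q:ℝ) * (-(k:ℝ))) • (Pi.single en 1 : Fin n → ℝ) := by
      module
    have h2 := hbase (x - ((q:ℝ) * (-(k:ℝ)-1)) • (Pi.single en 1 : Fin n → ℝ))
    rw [harg, hjz] at h2
    push_cast at ih h2 ⊢
    calc h (x - ((q:ℝ) * (-(k:ℝ)-1)) • (Pi.single en 1 : Fin n → ℝ))
        = e (-((a:ℝ) * x j)) * (e ((a:ℝ) * x j)
            * h (x - ((q:ℝ) * (-(k:ℝ)-1)) • (Pi.single en 1 : Fin n → ℝ))) := by
          rw [← mul_assoc, ← e_add, neg_add_cancel, e_zero, one_mul]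
      _ = e (-((a:ℝ) * x j)) * (e (-(k:ℝ) * ((a:ℝ) * x j)) * h x) := by
          rw [← h2, ih]
      _ = e ((-(k:ℝ)-1) * ((a:ℝ) * x j)) * h x := by
          rw [← mul_assoc, ← e_add,
            show -((a:ℝ) * x j) + -(k:ℝ) * ((a:ℝ) * x j) = (-(k:ℝ)-1) * ((a:ℝ) * x j) by ring]

end Shifts
/-! ### part (2): the dilation property -/

section Part2

variable {n q : ℕ} {a : ℤ} {dv : Fin n → ℤ} {j en : Fin n}

lemma ne_en_of_lt (hen : (en : ℕ) = n - 1) {i : Fin n} (hi : (i : ℕ) < n - 1) : i ≠ en := by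
  intro hcon
  rw [hcon, hen] at hi
  omega

lemma lt_of_ne_en (hen : (en : ℕ) = n - 1) {i : Fin n} (hi : i ≠ en) : (i : ℕ) < n - 1 := by
  have h1 : (i : ℕ) < n := i.isLt
  have h2 : (i : ℕ) ≠ n - 1 := by
    intro hcon
    exact hi (Fin.ext (by rw [hcon, hen]))
  omega

lemma part2 (hq : 0 < q) (hdv : ∀ i, 1 < |dv i|) (hen : (en : ℕ) = n - 1)
    (hjlt : (j : ℕ) < n - 1) {h : (Fin n → ℝ) → ℂ} (hX : Xmod n q a j en h) :
    ∃ h' : (Fin n → ℝ) → ℂ, Xmod n q a j en h' ∧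
      ∀ x : Fin n → ℝ,
        h x * ((gamR q en x : ℝ) : ℂ) =
          ((Real.sqrt (∏ i : Fin n, |(dv i : ℝ)|))⁻¹ : ℝ) *
            h' (fun i => ((dv i : ℝ))⁻¹ * x i) *
            ((gamR q en (fun i => ((dv i : ℝ))⁻¹ * x i) : ℝ) : ℂ) := by
  have hj : j ≠ en := ne_en_of_lt hen hjlt
  set c : ℤ := a * (dv en * dv j - 1) with hc
  set D : ℝ := ∏ i : Fin n, |(dv i : ℝ)| with hD
  have hDpos : 0 < D := Finset.prod_pos fun i _ => by
    have := hdv i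
    have : (1:ℝ) < |(dv i : ℝ)| := by rw [← Int.cast_abs]; exact_mod_cast this
    linarith
  have hdne : ∀ i : Fin n, (dv i : ℝ) ≠ 0 := by
    intro i
    have := hdv i
    simp only [ne_eq, Int.cast_eq_zero]
    intro hcon
    rw [hcon] at this
    simp at this
  set Amap : (Fin n → ℝ) → (Fin n → ℝ) := fun y => fun i => (dv i : ℝ) * y i with hAmap
  refine ⟨fun y => (Real.sqrt D : ℂ) * h (Amap y) * Gam q dv c en j y, ⟨?_, ?_, ?_⟩, ?_⟩
  · -- continuity
    apply Continuous.mul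
    apply Continuous.mul continuous_const
    · exact hX.1.comp (continuous_pi fun i => continuous_const.mul (continuous_apply i))
    · exact Gam_continuous hq hdv
  · -- periodicity in the first n-1 coordinates
    intro x i hi
    have hine : i ≠ en := ne_en_of_lt hen hi
    have harg : Amap (x + (Pi.single i 1 : Fin n → ℝ))
        = Amap x + ((dv i : ℤ) : ℝ) • (Pi.single i 1 : Fin n → ℝ) := by
      funext k
      simp only [hAmap, Pi.add_apply, Pi.smul_apply, Pi.single_apply, smul_eq_mul]
      by_cases hk : k = i
      · subst hk; simp; ring
      · simp [hk]
    beta_reduce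
    rw [harg, shift1 hX hi (dv i), Gam_add_single hj hine]
  · -- the twisted q-periodicity in the last coordinate
    intro x
    have harg : Amap (x - (q:ℝ) • (Pi.single en 1 : Fin n → ℝ))
        = Amap x - ((q:ℝ) * ((dv en : ℤ) : ℝ)) • (Pi.single en 1 : Fin n → ℝ) := by
      funext k
      simp only [hAmap, Pi.sub_apply, Pi.smul_apply, Pi.single_apply, smul_eq_mul]
      by_cases hk : k = en
      · subst hk; simp; ring
      · simp [hk]
    have hAj : (Amap x) j = (dv j : ℝ) * x j := rfl
    beta_reduce
    rw [harg, shift_en hX hj (dv en), Gam_sub_q hq hj, hAj]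
    rw [show ∀ (A B C E : ℂ), (Real.sqrt D : ℂ) * (A * B) * (C * E)
        = (A * C) * ((Real.sqrt D : ℂ) * B * E) from fun A B C E => by ring]
    rw [← e_add]
    congr 2
    push_cast [hc]
    ring
  · -- the dilation identity
    intro x
    set y : Fin n → ℝ := fun i => ((dv i : ℝ))⁻¹ * x i with hy
    have hxy : Amap y = x := by
      funext i
      simp only [hAmap, hy]
      rw [← mul_assoc, mul_inv_cancel₀ (hdne i), one_mul]
    have hkey := Gam_mul_gamR (q := q) (dv := dv) (c := c) (en := en) (j := j) hq hdv y
    have hAy : (fun i => (dv i : ℝ) * y i) = x := hxy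
    rw [hAy] at hkey
    have hsq : ((((Real.sqrt D)⁻¹ : ℝ)) : ℂ) * ((Real.sqrt D : ℝ) : ℂ) = 1 := by
      rw [← Complex.ofReal_mul, inv_mul_cancel₀ (by positivity : Real.sqrt D ≠ 0)]
      simp
    symm
    beta_reduce
    rw [hxy]
    rw [show ((((Real.sqrt D)⁻¹ : ℝ)) : ℂ) * ((Real.sqrt D : ℂ) * h x * Gam q dv c en j y)
          * ((gamR q en y : ℝ) : ℂ)
        = ((((Real.sqrt D)⁻¹ : ℝ)) : ℂ) * ((Real.sqrt D : ℝ) : ℂ)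
          * (h x * (Gam q dv c en j y * ((gamR q en y : ℝ) : ℂ))) from by ring]
    rw [hkey, hsq, one_mul]

end Part2
/-! ### the one- and multi-dimensional partition of unity -/

section Partition

lemma pfun_outside (t : ℝ) {m : ℤ} (hm : m ∉ ({⌊t⌋, ⌊t⌋ + 1} : Finset ℤ)) :
    pfun (t - m) = 0 := by
  simp only [Finset.mem_insert, Finset.mem_singleton, not_or] at hm
  apply pfun_eq_zero
  have hf1 := Int.floor_le t
  have hf2 := Int.lt_floor_add_one t
  rcases (by omega : m ≤ ⌊t⌋ - 1 ∨ ⌊t⌋ + 2 ≤ m) with hm' | hm'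
  · have : (m:ℝ) ≤ (⌊t⌋ : ℝ) - 1 := by exact_mod_cast hm'
    rw [abs_of_nonneg (by linarith)]
    linarith
  · have : ((⌊t⌋:ℝ)) + 2 ≤ (m:ℝ) := by exact_mod_cast hm'
    rw [abs_of_nonpos (by linarith)]
    linarith

lemma pfun_sum_two (t : ℝ) : ∑ m ∈ ({⌊t⌋, ⌊t⌋ + 1} : Finset ℤ), pfun (t - m) = 1 := by
  have hne : ⌊t⌋ ≠ ⌊t⌋ + 1 := by omega
  rw [Finset.sum_pair hne]
  have h1 : t - (⌊t⌋:ℝ) - 1 = t - ((⌊t⌋:ℤ) + 1 : ℤ) := by push_cast; ring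
  rw [← h1]
  exact pfun_add_pfun (by linarith [Int.floor_le t])
    (by linarith [Int.lt_floor_add_one t])

lemma pfun_tsum (t : ℝ) : ∑' m : ℤ, pfun (t - m) = 1 := by
  rw [tsum_eq_sum (fun m hm => pfun_outside t hm), pfun_sum_two]

lemma pfun_prod_tsum {n : ℕ} (T : Fin n → ℝ) :
    ∑' u : Fin n → ℤ, ((∏ i, pfun (T i - u i) : ℝ) : ℂ) = 1 := by
  classical
  rw [tsum_eq_sum (s := Fintype.piFinset fun i => ({⌊T i⌋, ⌊T i⌋ + 1} : Finset ℤ))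
    (fun u hu => by
      rw [Fintype.mem_piFinset] at hu
      push_neg at hu
      obtain ⟨i, hi⟩ := hu
      rw [show ((∏ i, pfun (T i - u i) : ℝ) : ℂ) = 0 from ?_]
      rw [Finset.prod_eq_zero (Finset.mem_univ i) (pfun_outside (T i) hi)]
      simp)]
  push_cast
  rw [← Finset.prod_univ_sum (fun i => ({⌊T i⌋, ⌊T i⌋ + 1} : Finset ℤ))
    (fun i m => ((pfun (T i - m) : ℝ) : ℂ))]
  rw [Finset.prod_eq_one]
  intro i _
  rw [show ∑ m ∈ ({⌊T i⌋, ⌊T i⌋ + 1} : Finset ℤ), ((pfun (T i - m) : ℝ) : ℂ)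
      = (((∑ m ∈ ({⌊T i⌋, ⌊T i⌋ + 1} : Finset ℤ), pfun (T i - m) : ℝ)) : ℂ) by push_cast; ring,
    pfun_sum_two]
  simp

end Partition

/-! ### splitting `ℤⁿ` as `Fin q × (lattice)` at the coordinate `en` -/

noncomputable def EE {n : ℕ} (q : ℕ) (hq : 0 < q) (en : Fin n) :
    Fin q × (Fin n → ℤ) ≃ (Fin n → ℤ) where
  toFun p := Function.update p.2 en ((q:ℤ) * p.2 en + (p.1 : ℤ))
  invFun v := (⟨(v en % q).toNat, by
      have h1 : 0 ≤ v en % (q:ℤ) := Int.emod_nonneg _ (by exact_mod_cast hq.ne')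
      have h2 : v en % (q:ℤ) < q := Int.emod_lt_of_pos _ (by exact_mod_cast hq)
      omega⟩,
    Function.update v en (v en / q))
  left_inv p := by
    obtain ⟨k, u⟩ := p
    have hqz : (0:ℤ) < q := by exact_mod_cast hq
    have hk0 : (0:ℤ) ≤ (k:ℤ) := Int.natCast_nonneg _
    have hkq : ((k:ℕ):ℤ) < (q:ℤ) := by exact_mod_cast k.isLt
    have hmod : ((q:ℤ) * u en + (k:ℤ)) % q = (k:ℤ) := by
      rw [mul_comm, add_comm, Int.add_mul_emod_self_right]
      exact Int.emod_eq_of_lt hk0 hkq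
    have hdiv : ((q:ℤ) * u en + (k:ℤ)) / q = u en := by
      rw [add_comm, Int.add_mul_ediv_left _ _ hqz.ne', Int.ediv_eq_zero_of_lt hk0 hkq]
      ring
    ext
    · simp only [Function.update_self, hmod]
      omega
    · rename_i i
      simp only
      rw [Function.update_idem]
      by_cases hi : i = en
      · subst hi
        rw [Function.update_self, Function.update_self, hdiv]
      · rw [Function.update_of_ne hi]
  right_inv v := by
    simp only
    rw [Function.update_idem, Function.update_self]
    have h1 : 0 ≤ v en % (q:ℤ) := Int.emod_nonneg _ (by exact_mod_cast hq.ne')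
    have : (q:ℤ) * (v en / q) + ((v en % q).toNat : ℤ) = v en := by
      rw [Int.toNat_of_nonneg h1]
      exact Int.mul_ediv_add_emod _ _
    rw [this, Function.update_eq_self]
/-! ### lattice periodicity of `conj h₁ · h₂` -/

section Part1

variable {n q : ℕ} {a : ℤ} {j en : Fin n} {h₁ h₂ : (Fin n → ℝ) → ℂ}

lemma Bshift_single (hX₁ : Xmod n q a j en h₁) (hX₂ : Xmod n q a j en h₂)
    (hen : (en : ℕ) = n - 1) (hj : j ≠ en) (z : Fin n → ℝ) (i : Fin n) (m : ℤ)
    (him : i = en → (q:ℤ) ∣ m) :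
    (starRingEnd ℂ) (h₁ (z - (m:ℝ) • (Pi.single i 1 : Fin n → ℝ))) *
      h₂ (z - (m:ℝ) • (Pi.single i 1 : Fin n → ℝ)) =
    (starRingEnd ℂ) (h₁ z) * h₂ z := by
  by_cases hi : i = en
  · subst hi
    obtain ⟨m', rfl⟩ := him rfl
    have harg : z - (((q:ℤ) * m' : ℤ):ℝ) • (Pi.single i 1 : Fin n → ℝ)
        = z - ((q:ℝ) * (m':ℝ)) • (Pi.single i 1 : Fin n → ℝ) := by
      push_cast
      ring_nf
    rw [harg, shift_en hX₁ hj m' z, shift_en hX₂ hj m' z, map_mul]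
    rw [show (starRingEnd ℂ) (e ((m':ℝ) * ((a:ℝ) * z j))) * (starRingEnd ℂ) (h₁ z) *
        (e ((m':ℝ) * ((a:ℝ) * z j)) * h₂ z)
      = ((starRingEnd ℂ) (e ((m':ℝ) * ((a:ℝ) * z j))) * e ((m':ℝ) * ((a:ℝ) * z j))) *
        ((starRingEnd ℂ) (h₁ z) * h₂ z) from by ring, e_conj_mul_self, one_mul]
  · have hlt : (i : ℕ) < n - 1 := lt_of_ne_en hen hi
    have harg : z - (m:ℝ) • (Pi.single i 1 : Fin n → ℝ)
        = z + ((-m : ℤ):ℝ) • (Pi.single i 1 : Fin n → ℝ) := by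
      push_cast
      module
    rw [harg, shift1 hX₁ hlt (-m) z, shift1 hX₂ hlt (-m) z]

lemma Bshift (hX₁ : Xmod n q a j en h₁) (hX₂ : Xmod n q a j en h₂)
    (hen : (en : ℕ) = n - 1) (hj : j ≠ en) (u : Fin n → ℤ) (hdvd : (q:ℤ) ∣ u en)
    (z : Fin n → ℝ) :
    (starRingEnd ℂ) (h₁ (z - fun i => (u i : ℝ))) * h₂ (z - fun i => (u i : ℝ)) =
    (starRingEnd ℂ) (h₁ z) * h₂ z := by
  classical
  suffices H : ∀ s : Finset (Fin n), ∀ u : Fin n → ℤ, (∀ i ∉ s, u i = 0) → (q:ℤ) ∣ u en →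
      ∀ z : Fin n → ℝ,
      (starRingEnd ℂ) (h₁ (z - fun i => (u i : ℝ))) * h₂ (z - fun i => (u i : ℝ)) =
      (starRingEnd ℂ) (h₁ z) * h₂ z by
    exact H Finset.univ u (fun i hi => absurd (Finset.mem_univ i) hi) hdvd z
  intro s
  induction s using Finset.induction_on with
  | empty =>
    intro u hsupp _ z
    have : (fun i => (u i : ℝ)) = 0 := by
      funext i
      rw [hsupp i (Finset.notMem_empty i)]
      simp
    rw [this, sub_zero]
  | @insert b s hanotin ih =>
    intro u hsupp hdvd z
    set u' : Fin n → ℤ := Function.update u b 0 with hu'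
    set z' : Fin n → ℝ := z - ((u b : ℤ):ℝ) • (Pi.single b 1 : Fin n → ℝ) with hz'
    have harg : (z - fun i => (u i : ℝ)) = z' - fun i => (u' i : ℝ) := by
      funext i
      simp only [hz', hu', Pi.sub_apply, Pi.smul_apply, Pi.single_apply, smul_eq_mul]
      by_cases hib : i = b
      · subst hib
        rw [Function.update_self]
        simp
      · rw [Function.update_of_ne hib]
        simp [hib]
    rw [harg]
    rw [ih u' (fun i hi => by
        by_cases hib : i = b
        · subst hib; rw [hu', Function.update_self]
        · rw [hu', Function.update_of_ne hib]
          exact hsupp i (by simp [hib, hi]))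
      (by
        by_cases hbe : b = en
        · subst hbe; rw [hu', Function.update_self]; exact dvd_zero _
        · rw [hu', Function.update_of_ne (fun hcon => hbe hcon.symm)]
          exact hdvd) z']
    exact Bshift_single hX₁ hX₂ hen hj z b (u b)
      (fun hbe => by subst hbe; exact hdvd)

/-! ### support of the window along lattice translates -/

lemma gamR_outside {n : ℕ} {q : ℕ} {en : Fin n} (hq : 0 < q) (x : Fin n → ℝ)
    {v : Fin n → ℤ}
    (hv : v ∉ Fintype.piFinset fun i => Finset.Icc (⌊x i⌋ - (q:ℤ) - 1) (⌊x i⌋ + (q:ℤ) + 1)) :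
    gamR q en (x - fun i => (v i : ℝ)) = 0 := by
  rw [Fintype.mem_piFinset] at hv
  push_neg at hv
  obtain ⟨i, hi⟩ := hv
  rw [Finset.mem_Icc, not_and_or] at hi
  have hq1 : (1:ℝ) ≤ (q:ℝ) := by exact_mod_cast hq
  have hf1 := Int.floor_le (x i)
  have hf2 := Int.lt_floor_add_one (x i)
  have hbig : (q:ℝ) ≤ |x i - v i| := by
    rcases hi with hi | hi
    · push_neg at hi
      have : (v i : ℝ) ≤ (⌊x i⌋:ℝ) - q - 2 := by
        have : v i ≤ ⌊x i⌋ - q - 2 := by omega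
        exact_mod_cast this
      rw [abs_of_nonneg (by linarith)]
      linarith
    · push_neg at hi
      have : (⌊x i⌋:ℝ) + q + 2 ≤ (v i:ℝ) := by
        have : ⌊x i⌋ + q + 2 ≤ v i := by omega
        exact_mod_cast this
      rw [abs_of_nonpos (by linarith)]
      linarith
  apply Finset.prod_eq_zero (Finset.mem_univ i)
  apply phi_eq_zero
  have hcc : 0 < cc q en i := cc_pos hq i
  have hccq : cc q en i ≤ (q:ℝ) := by
    unfold cc
    split
    · exact le_refl _
    · exact hq1
  have hxi : (x - fun i => ((v i : ℤ):ℝ)) i = x i - v i := rfl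
  rw [hxi, abs_div, abs_of_pos hcc, le_div_iff₀ hcc]
  nlinarith

end Part1
/-! ### part (1) assembled -/

section Part1Main

variable {n q : ℕ} {a : ℤ} {j en : Fin n} {h₁ h₂ : (Fin n → ℝ) → ℂ}

lemma part1 (hq : 0 < q) (hen : (en : ℕ) = n - 1) (hjlt : (j : ℕ) < n - 1)
    (hX₁ : Xmod n q a j en h₁) (hX₂ : Xmod n q a j en h₂) (x : Fin n → ℝ) :
    Summable (fun v : Fin n → ℤ =>
      ‖(starRingEnd ℂ)
          (h₁ (x - fun i => (v i : ℝ)) * ((gamR q en (x - fun i => (v i : ℝ)) : ℝ) : ℂ)) *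
        (h₂ (x - fun i => (v i : ℝ)) * ((gamR q en (x - fun i => (v i : ℝ)) : ℝ) : ℂ))‖) ∧
    ∑' v : Fin n → ℤ,
      (starRingEnd ℂ)
          (h₁ (x - fun i => (v i : ℝ)) * ((gamR q en (x - fun i => (v i : ℝ)) : ℝ) : ℂ)) *
        (h₂ (x - fun i => (v i : ℝ)) * ((gamR q en (x - fun i => (v i : ℝ)) : ℝ) : ℂ)) =
    ∑ k ∈ Finset.range q,
      (starRingEnd ℂ) (h₁ (x - (k : ℝ) • (Pi.single en 1 : Fin n → ℝ))) *
        h₂ (x - (k : ℝ) • (Pi.single en 1 : Fin n → ℝ)) := by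
  classical
  have hj : j ≠ en := ne_en_of_lt hen hjlt
  set term : (Fin n → ℤ) → ℂ := fun v =>
    (starRingEnd ℂ)
        (h₁ (x - fun i => (v i : ℝ)) * ((gamR q en (x - fun i => (v i : ℝ)) : ℝ) : ℂ)) *
      (h₂ (x - fun i => (v i : ℝ)) * ((gamR q en (x - fun i => (v i : ℝ)) : ℝ) : ℂ)) with hterm
  -- rewrite each term
  have htermf : ∀ z : Fin n → ℝ,
      (starRingEnd ℂ) (h₁ z * ((gamR q en z : ℝ) : ℂ)) * (h₂ z * ((gamR q en z : ℝ) : ℂ))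
      = ((starRingEnd ℂ) (h₁ z) * h₂ z) * ((∏ i, pfun (z i / cc q en i) : ℝ) : ℂ) := by
    intro z
    have hg2 : gamR q en z * gamR q en z = ∏ i, pfun (z i / cc q en i) := by
      rw [gamR, ← Finset.prod_mul_distrib]
      exact Finset.prod_congr rfl fun i _ => by rw [← pow_two, phi_sq]
    rw [map_mul, Complex.conj_ofReal,
      show (starRingEnd ℂ) (h₁ z) * ((gamR q en z : ℝ) : ℂ) * (h₂ z * ((gamR q en z : ℝ) : ℂ))
        = ((starRingEnd ℂ) (h₁ z) * h₂ z) * (((gamR q en z : ℝ) : ℂ) * ((gamR q en z : ℝ) : ℂ))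
        from by ring, ← Complex.ofReal_mul, hg2]
  -- vanishing off a finite window
  have hout : ∀ v ∉ Fintype.piFinset fun i => Finset.Icc (⌊x i⌋ - (q:ℤ) - 1) (⌊x i⌋ + (q:ℤ) + 1),
      term v = 0 := by
    intro v hv
    rw [hterm]
    simp only
    rw [gamR_outside hq x hv]
    simp
  have hsummable : Summable term := summable_of_ne_finset_zero hout
  constructor
  · apply summable_of_ne_finset_zero
      (s := Fintype.piFinset fun i => Finset.Icc (⌊x i⌋ - (q:ℤ) - 1) (⌊x i⌋ + (q:ℤ) + 1))
    intro v hv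
    rw [show (starRingEnd ℂ)
          (h₁ (x - fun i => (v i : ℝ)) * ((gamR q en (x - fun i => (v i : ℝ)) : ℝ) : ℂ)) *
        (h₂ (x - fun i => (v i : ℝ)) * ((gamR q en (x - fun i => (v i : ℝ)) : ℝ) : ℂ)) = term v
        from rfl, hout v hv, norm_zero]
  · rw [show (∑' v : Fin n → ℤ,
        (starRingEnd ℂ)
            (h₁ (x - fun i => (v i : ℝ)) * ((gamR q en (x - fun i => (v i : ℝ)) : ℝ) : ℂ)) *
          (h₂ (x - fun i => (v i : ℝ)) * ((gamR q en (x - fun i => (v i : ℝ)) : ℝ) : ℂ)))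
        = ∑' v, term v from rfl]
    rw [← Equiv.tsum_eq (EE q hq en) term]
    have hsum2 : Summable (fun p : Fin q × (Fin n → ℤ) => term (EE q hq en p)) :=
      (Equiv.summable_iff (EE q hq en)).mpr hsummable
    rw [Summable.tsum_prod' hsum2 (fun k => hsum2.prod_factor k)]
    rw [tsum_fintype]
    -- compute each inner sum
    have hinner : ∀ k : Fin q, ∑' u : Fin n → ℤ, term (EE q hq en (k, u))
        = (starRingEnd ℂ) (h₁ (x - ((k:ℕ) : ℝ) • (Pi.single en 1 : Fin n → ℝ))) *
            h₂ (x - ((k:ℕ) : ℝ) • (Pi.single en 1 : Fin n → ℝ)) := by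
      intro k
      set zk : Fin n → ℝ := x - ((k:ℕ) : ℝ) • (Pi.single en 1 : Fin n → ℝ) with hzk
      set T : Fin n → ℝ := fun i => if i = en then (x en - ((k:ℕ):ℝ)) / q else x i with hT
      have hterm_ku : ∀ u : Fin n → ℤ, term (EE q hq en (k, u))
          = ((starRingEnd ℂ) (h₁ zk) * h₂ zk) * ((∏ i, pfun (T i - u i) : ℝ) : ℂ) := by
        intro u
        set v : Fin n → ℤ := EE q hq en (k, u) with hv
        have hvi : ∀ i, v i = if i = en then (q:ℤ) * u en + (k:ℤ) else u i := by
          intro i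
          rw [hv, show (EE q hq en (k, u) : Fin n → ℤ)
            = Function.update u en ((q:ℤ) * u en + (k:ℤ)) from rfl]
          by_cases hi : i = en
          · subst hi; rw [Function.update_self, if_pos rfl]
          · rw [Function.update_of_ne hi, if_neg hi]
        set u' : Fin n → ℤ := Function.update u en ((q:ℤ) * u en) with hu'
        have hsplit : (x - fun i => (v i : ℝ)) = zk - fun i => (u' i : ℝ) := by
          funext i
          simp only [Pi.sub_apply, hzk, Pi.smul_apply, Pi.single_apply, smul_eq_mul]
          rw [hvi i]
          by_cases hi : i = en
          · subst hi
            rw [if_pos rfl, hu', Function.update_self]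
            push_cast
            ring_nf
            simp
          · rw [if_neg hi, hu', Function.update_of_ne hi]
            simp [hi]
        have hdvd : (q:ℤ) ∣ u' en := by
          rw [hu', Function.update_self]
          exact ⟨u en, rfl⟩
        rw [hterm]
        simp only
        rw [htermf, hsplit, Bshift hX₁ hX₂ hen hj u' hdvd zk]
        congr 1
        rw [show ((∏ i, pfun (T i - u i) : ℝ) : ℂ)
            = ((∏ i, pfun ((zk - fun i' => (u' i' : ℝ)) i / cc q en i) : ℝ) : ℂ) from ?_]
        congr 1
        apply Finset.prod_congr rfl
        intro i _
        congr 1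
        simp only [Pi.sub_apply, hzk, hT, Pi.smul_apply, Pi.single_apply, smul_eq_mul, cc]
        by_cases hi : i = en
        · subst hi
          rw [if_pos rfl, if_pos rfl, if_pos rfl, hu', Function.update_self]
          have hqne : (q:ℝ) ≠ 0 := by positivity
          push_cast
          field_simp
        · rw [if_neg hi, if_neg hi, if_neg hi, hu', Function.update_of_ne hi]
          simp [hi]
      calc ∑' u : Fin n → ℤ, term (EE q hq en (k, u))
          = ∑' u : Fin n → ℤ,
              ((starRingEnd ℂ) (h₁ zk) * h₂ zk) * ((∏ i, pfun (T i - u i) : ℝ) : ℂ) :=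
            tsum_congr hterm_ku
        _ = ((starRingEnd ℂ) (h₁ zk) * h₂ zk) * ∑' u : Fin n → ℤ,
              ((∏ i, pfun (T i - u i) : ℝ) : ℂ) := tsum_mul_left
        _ = (starRingEnd ℂ) (h₁ zk) * h₂ zk := by rw [pfun_prod_tsum T, mul_one]
    rw [Finset.sum_congr rfl (fun k _ => hinner k)]
    exact Fin.sum_univ_eq_sum_range (fun m : ℕ =>
      (starRingEnd ℂ) (h₁ (x - (m : ℝ) • (Pi.single en 1 : Fin n → ℝ))) *
        h₂ (x - (m : ℝ) • (Pi.single en 1 : Fin n → ℝ))) q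

end Part1Main

end S13

open S13

/-- For a diagonal integer dilation matrix
`A = diag(d₁,…,d_n)` with `|d_i| > 1`, there is a continuous `γ : ℝⁿ → ℂ` such
that `h ↦ h·γ` embeds `X(q,0,…,0,a_j,0,…,0)` into `Ξ` preserving the
`C(𝕋ⁿ)`-valued inner products, and the image is contained in its dilate:
every `h·γ` equals `d^{−1/2} (h'·γ)∘A⁻¹` for some `h'` in the module. -/
theorem stmt_13 (n : ℕ) (hn : 2 ≤ n) (dv : Fin n → ℤ) (hdv : ∀ i, 1 < |dv i|)
    (q : ℕ) (hq : 0 < q) (a : ℤ) (j : Fin n) (hj : (j : ℕ) < n - 1) :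
    ∃ γ : (Fin n → ℝ) → ℂ, Continuous γ ∧
      (∀ h₁ h₂ : (Fin n → ℝ) → ℂ,
        Xmod n q a j ⟨n - 1, by omega⟩ h₁ → Xmod n q a j ⟨n - 1, by omega⟩ h₂ →
        ∀ x : Fin n → ℝ,
          Summable (fun v : Fin n → ℤ =>
            ‖(starRingEnd ℂ)
                (h₁ (x - fun i => (v i : ℝ)) * γ (x - fun i => (v i : ℝ))) *
              (h₂ (x - fun i => (v i : ℝ)) * γ (x - fun i => (v i : ℝ)))‖) ∧
          ∑' v : Fin n → ℤ,
            (starRingEnd ℂ)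
                (h₁ (x - fun i => (v i : ℝ)) * γ (x - fun i => (v i : ℝ))) *
              (h₂ (x - fun i => (v i : ℝ)) * γ (x - fun i => (v i : ℝ))) =
          ∑ k ∈ Finset.range q,
            (starRingEnd ℂ)
                (h₁ (x - (k : ℝ) • (Pi.single (⟨n - 1, by omega⟩ : Fin n) 1 : Fin n → ℝ))) *
              h₂ (x - (k : ℝ) • (Pi.single (⟨n - 1, by omega⟩ : Fin n) 1 : Fin n → ℝ))) ∧
      (∀ h : (Fin n → ℝ) → ℂ, Xmod n q a j ⟨n - 1, by omega⟩ h →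
        ∃ h' : (Fin n → ℝ) → ℂ, Xmod n q a j ⟨n - 1, by omega⟩ h' ∧
          ∀ x : Fin n → ℝ,
            h x * γ x = ((Real.sqrt (∏ i : Fin n, |(dv i : ℝ)|))⁻¹ : ℝ) *
              h' ((Matrix.diagonal fun i : Fin n => (dv i : ℝ))⁻¹.mulVec x) *
              γ ((Matrix.diagonal fun i : Fin n => (dv i : ℝ))⁻¹.mulVec x)) := by
  classical
  set en : Fin n := ⟨n - 1, by omega⟩ with hen_def
  have hen : (en : ℕ) = n - 1 := rfl
  refine ⟨fun y => ((gamR q en y : ℝ) : ℂ), ?_, ?_, ?_⟩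
  · exact Complex.continuous_ofReal.comp (gamR_continuous hq)
  · intro h₁ h₂ hX₁ hX₂ x
    exact part1 hq hen hj hX₁ hX₂ x
  · intro h hX
    obtain ⟨h', hX', heq⟩ := part2 (dv := dv) hq hdv hen hj hX
    refine ⟨h', hX', ?_⟩
    intro x
    have hdne : ∀ i : Fin n, (dv i : ℝ) ≠ 0 := by
      intro i
      have h1 := hdv i
      simp only [ne_eq, Int.cast_eq_zero]
      intro hcon
      rw [hcon] at h1
      simp at h1
    have hInv : (Matrix.diagonal fun i : Fin n => (dv i : ℝ))⁻¹.mulVec x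
        = fun i => ((dv i : ℝ))⁻¹ * x i := by
      have hinv : (Matrix.diagonal fun i : Fin n => (dv i : ℝ))⁻¹
          = Matrix.diagonal (fun i : Fin n => ((dv i : ℝ))⁻¹) := by
        apply Matrix.inv_eq_right_inv
        rw [Matrix.diagonal_mul_diagonal,
          show (fun i : Fin n => (dv i : ℝ) * ((dv i : ℝ))⁻¹) = fun _ => (1:ℝ) from
            funext fun i => mul_inv_cancel₀ (hdne i), Matrix.diagonal_one]
      rw [hinv]
      funext i
      rw [Matrix.mulVec_diagonal]
    rw [hInv]
    exact heq x
end
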